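/- arXiv:1001.3344 — 5 statements merged into one kernel-verified Lean document; each statement's English description precedes it below -/
import Mathlib

section
/- Sewing map (Theorem 2.1): Let V be a Banach space, ℓ₁ < ℓ₂ real numbers, and μ > 1. Let h be a continuous V-valued 2-increment on {(s,u,t) : ℓ₁ ≤ s ≤ u ≤ t ≤ ℓ₂} such that (δh)_{suvt} := h_{uvt} − h_{svt} + h_{sut} − h_{suv} = 0 for all ℓ₁ ≤ s ≤ u ≤ v ≤ t ≤ ℓ₂ and ‖h‖_μ < ∞. Then there exists a unique continuous map Λh : {(s,t) : ℓ₁ ≤ s ≤ t ≤ ℓ₂} → V vanishing on the diagonal with sup_{s<t} ‖(Λh)_{st}‖/(t−s)^μ < ∞ and (Λh)_{st} − (Λh)_{su} − (Λh)_{ut} = h_{sut} for all s ≤ u ≤ t. Moreover h ↦ Λh is linear and there is a constant c_μ depending only on μ such that sup_{s<t} ‖(Λh)_{st}‖/(t−s)^μ ≤ c_μ ‖h‖_μ. -/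
open Set
open scoped ENNReal

noncomputable section

variable {V : Type*} [NormedAddCommGroup V]

/-- A (continuous) 2-increment on the simplex over `[l1, l2]`: continuous on the simplex and
vanishing whenever two consecutive arguments coincide. -/
def IsTwoIncrement (l1 l2 : ℝ) (h : ℝ → ℝ → ℝ → V) : Prop :=
  ContinuousOn (fun p : ℝ × ℝ × ℝ => h p.1 p.2.1 p.2.2)
    {p : ℝ × ℝ × ℝ | l1 ≤ p.1 ∧ p.1 ≤ p.2.1 ∧ p.2.1 ≤ p.2.2 ∧ p.2.2 ≤ l2} ∧
  ∀ s u t : ℝ, l1 ≤ s → s ≤ u → u ≤ t → t ≤ l2 → (s = u ∨ u = t) → h s u t = 0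

/-- The `(ρ, σ')`-Hölder norm `‖h‖_{ρ,σ'} = sup ‖h_{sut}‖ / ((u-s)^ρ (t-u)^σ')` of a
2-increment, as an extended nonnegative real. -/
noncomputable def twoIncNorm (l1 l2 ρ σ' : ℝ) (h : ℝ → ℝ → ℝ → V) : ℝ≥0∞ :=
  ⨆ p : {p : ℝ × ℝ × ℝ // l1 ≤ p.1 ∧ p.1 ≤ p.2.1 ∧ p.2.1 ≤ p.2.2 ∧ p.2.2 ≤ l2},
    ENNReal.ofReal (‖h p.1.1 p.1.2.1 p.1.2.2‖ /
      ((p.1.2.1 - p.1.1) ^ ρ * (p.1.2.2 - p.1.2.1) ^ σ'))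

/-- The norm `‖h‖_μ`: infimum of `∑ᵢ ‖hᵢ‖_{ρᵢ, μ - ρᵢ}` over all countable decompositions
`h = ∑ᵢ hᵢ` into 2-increments and all choices `ρᵢ ∈ (0, μ)`. -/
noncomputable def muNorm (l1 l2 μ : ℝ) (h : ℝ → ℝ → ℝ → V) : ℝ≥0∞ :=
  ⨅ (hs : ℕ → ℝ → ℝ → ℝ → V) (ρ : ℕ → ℝ)
    (_ : ∀ i, IsTwoIncrement l1 l2 (hs i))
    (_ : ∀ i, 0 < ρ i ∧ ρ i < μ)
    (_ : ∀ s u t : ℝ, l1 ≤ s → s ≤ u → u ≤ t → t ≤ l2 →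
        HasSum (fun i => hs i s u t) (h s u t)),
    ∑' i, twoIncNorm l1 l2 (ρ i) (μ - ρ i) (hs i)

/-- The defining properties of the sewing map `Λh`: continuous on the simplex, vanishing on the
diagonal, with finite `μ`-Hölder sup, and with coboundary `δ(Λh) = h`. -/
def IsSewing (l1 l2 μ : ℝ) (h : ℝ → ℝ → ℝ → V) (Λ : ℝ → ℝ → V) : Prop :=
  ContinuousOn (fun p : ℝ × ℝ => Λ p.1 p.2)
    {p : ℝ × ℝ | l1 ≤ p.1 ∧ p.1 ≤ p.2 ∧ p.2 ≤ l2} ∧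
  (∀ t : ℝ, l1 ≤ t → t ≤ l2 → Λ t t = 0) ∧
  (⨆ p : {p : ℝ × ℝ // l1 ≤ p.1 ∧ p.1 < p.2 ∧ p.2 ≤ l2},
      ENNReal.ofReal (‖Λ p.1.1 p.1.2‖ / (p.1.2 - p.1.1) ^ μ)) < ⊤ ∧
  ∀ s u t : ℝ, l1 ≤ s → s ≤ u → u ≤ t → t ≤ l2 → Λ s t - Λ s u - Λ u t = h s u t

/-!
Since `δh = 0`, `h` is the coboundary of `B a b := -h l1 a b`. A decomposition of `h` with
finite `∑ᵢ ‖hᵢ‖_{ρᵢ, μ - ρᵢ}` gives `‖h s u t‖ ≤ K (t - s) ^ μ`, so the dyadic series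
`Λ s t = ∑ⱼ ∑ₖ h (xₖ, midpoint, xₖ₊₁)` over the `2 ^ j` dyadic subintervals of `[s, t]` converges
geometrically, with `‖Λ s t‖ ≤ K (t - s) ^ μ / (1 - 2 ^ (1 - μ))`. Its partial sums are `B s t`
minus the Riemann sums of `B` on the dyadic partitions, so `I = B - Λ` is their limit. Comparing
Riemann sums on `N · 2 ^ m` equal pieces shows that `I` is additive along equal subdivisions,
hence, by continuity, along all of them; thus `δΛ = δB = h`. Two sewings differ by an additive
map that is `O((t - s) ^ μ)` with `μ > 1`, which vanishes.
-/

open Filter Topology Finset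

def gridPt (a b : ℝ) (N i : ℕ) : ℝ := a + i * (b - a) / N

section Grid

variable {a b : ℝ} {N : ℕ}

@[simp] lemma gridPt_zero (a b : ℝ) (N : ℕ) : gridPt a b N 0 = a := by simp [gridPt]

lemma gridPt_self (a b : ℝ) (hN : N ≠ 0) : gridPt a b N N = b := by
  have : (N : ℝ) ≠ 0 := Nat.cast_ne_zero.2 hN
  simp only [gridPt]; field_simp; ring

lemma gridPt_mono (hab : a ≤ b) (N : ℕ) : Monotone (gridPt a b N) := fun i j hij => by
  unfold gridPt; gcongr

lemma gridPt_succ_sub (a b : ℝ) (N i : ℕ) :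
    gridPt a b N (i + 1) - gridPt a b N i = (b - a) / N := by
  simp only [gridPt]; push_cast; ring

lemma left_le_gridPt (hab : a ≤ b) (N i : ℕ) : a ≤ gridPt a b N i := by
  simpa using gridPt_mono hab N (Nat.zero_le i)

lemma gridPt_le_right (hab : a ≤ b) (hN : N ≠ 0) {i : ℕ} (hi : i ≤ N) :
    gridPt a b N i ≤ b := by
  simpa [gridPt_self a b hN] using gridPt_mono hab N hi

lemma gridPt_gridPt {M : ℕ} (hN : N ≠ 0) (hM : M ≠ 0) (i r : ℕ) :
    gridPt (gridPt a b N i) (gridPt a b N (i + 1)) M r = gridPt a b (N * M) (i * M + r) := by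
  have : (N : ℝ) ≠ 0 := Nat.cast_ne_zero.2 hN
  have : (M : ℝ) ≠ 0 := Nat.cast_ne_zero.2 hM
  simp only [gridPt]; push_cast; field_simp; ring

lemma gridPt_left_gridPt {k : ℕ} (hN : N ≠ 0) (hk : k ≠ 0) (i : ℕ) :
    gridPt a (gridPt a b N k) k i = gridPt a b N i := by
  have : (N : ℝ) ≠ 0 := Nat.cast_ne_zero.2 hN
  have : (k : ℝ) ≠ 0 := Nat.cast_ne_zero.2 hk
  simp only [gridPt]; field_simp; ring

lemma gridPt_gridPt_right {k : ℕ} (hkN : k < N) (i : ℕ) :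
    gridPt (gridPt a b N k) b (N - k) i = gridPt a b N (k + i) := by
  have : (N : ℝ) ≠ 0 := Nat.cast_ne_zero.2 (by omega)
  have : (N : ℝ) - k ≠ 0 := sub_ne_zero.2 (by exact_mod_cast hkN.ne')
  simp only [gridPt]
  rw [Nat.cast_sub hkN.le]
  push_cast; field_simp; ring

lemma gridPt_two_one (a b : ℝ) : gridPt a b 2 1 = (a + b) / 2 := by
  simp only [gridPt]; push_cast; ring

lemma exists_tendsto_gridPt {a u b : ℝ} (hau : a ≤ u) (hub : u ≤ b) (hab : a < b) :
    ∃ k : ℕ → ℕ, (∀ n, k n ≤ n) ∧ Tendsto (fun n => gridPt a b n (k n)) atTop (𝓝 u) := by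
  set θ := (u - a) / (b - a)
  have hba : 0 < b - a := sub_pos.2 hab
  have hθ0 : 0 ≤ θ := div_nonneg (sub_nonneg.2 hau) hba.le
  have hθ1 : θ ≤ 1 := (div_le_one hba).2 (by linarith)
  refine ⟨fun n => ⌊θ * n⌋₊, fun n => Nat.floor_le_of_le (by nlinarith [n.cast_nonneg (α := ℝ)]),
    ?_⟩
  have hlim := (((tendsto_nat_floor_mul_div_atTop hθ0).comp
    tendsto_natCast_atTop_atTop).mul_const (b - a)).const_add a
  have hu : a + θ * (b - a) = u := by simp only [θ]; field_simp; ring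
  rw [hu] at hlim
  refine hlim.congr fun n => ?_
  simp only [Function.comp, gridPt]
  ring

end Grid

section Telescope

variable {W : Type*} [AddCommGroup W] {l1 l2 a b : ℝ} {B : ℝ → ℝ → W} {h : ℝ → ℝ → ℝ → W}

lemma sum_range_mul (N M : ℕ) (f : ℕ → W) :
    ∑ j ∈ range (N * M), f j = ∑ i ∈ range N, ∑ r ∈ range M, f (i * M + r) := by
  induction N with
  | zero => simp
  | succ n ih => rw [Nat.succ_mul, sum_range_add, ih, sum_range_succ]

def riemannSum (B : ℝ → ℝ → W) (N : ℕ) (a b : ℝ) : W :=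
  ∑ i ∈ range N, B (gridPt a b N i) (gridPt a b N (i + 1))

lemma riemannSum_one (B : ℝ → ℝ → W) (a b : ℝ) : riemannSum B 1 a b = B a b := by
  simp [riemannSum, gridPt_self a b one_ne_zero]

lemma riemannSum_mul (B : ℝ → ℝ → W) {N M : ℕ} (hN : N ≠ 0) (hM : M ≠ 0) (a b : ℝ) :
    riemannSum B (N * M) a b =
      ∑ i ∈ range N, riemannSum B M (gridPt a b N i) (gridPt a b N (i + 1)) := by
  simp only [riemannSum, sum_range_mul, gridPt_gridPt hN hM, add_assoc]

lemma sub_sum_eq_sum_of_coboundary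
    (hB : ∀ a u b, l1 ≤ a → a ≤ u → u ≤ b → b ≤ l2 → B a b - B a u - B u b = h a u b)
    {x : ℕ → ℝ} (hx : Monotone x) (h0 : l1 ≤ x 0) (N : ℕ) (hN : x (N + 1) ≤ l2) :
    B (x 0) (x (N + 1)) - ∑ i ∈ range (N + 1), B (x i) (x (i + 1)) =
      ∑ i ∈ range N, h (x 0) (x (i + 1)) (x (i + 2)) := by
  induction N with
  | zero => simp
  | succ n ih =>
    have hn : x (n + 1) ≤ l2 := (hx (Nat.le_succ _)).trans hN
    rw [sum_range_succ (fun i => B (x i) (x (i + 1))) (n + 1),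
      sum_range_succ (fun i => h (x 0) (x (i + 1)) (x (i + 2))) n, ← ih hn,
      ← hB _ _ _ h0 (hx (Nat.zero_le _)) (hx (Nat.le_succ _)) hN]
    abel

lemma riemannSum_two (B : ℝ → ℝ → W) (a b : ℝ) :
    riemannSum B 2 a b = B a ((a + b) / 2) + B ((a + b) / 2) b := by
  simp [riemannSum, sum_range_succ, gridPt_two_one, gridPt_self a b two_ne_zero]

lemma sub_riemannSum_eq
    (hB : ∀ a u b, l1 ≤ a → a ≤ u → u ≤ b → b ≤ l2 → B a b - B a u - B u b = h a u b)
    (ha : l1 ≤ a) (hab : a ≤ b) (hb : b ≤ l2) (N : ℕ) :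
    B a b - riemannSum B (N + 1) a b =
      ∑ i ∈ range N, h a (gridPt a b (N + 1) (i + 1)) (gridPt a b (N + 1) (i + 2)) := by
  have := sub_sum_eq_sum_of_coboundary hB (gridPt_mono hab (N + 1)) (by simpa using ha) N
    (by rwa [gridPt_self a b N.succ_ne_zero])
  rwa [gridPt_zero, gridPt_self a b N.succ_ne_zero] at this

lemma riemannSum_eq_of_additive {g : ℝ → ℝ → W}
    (hg : ∀ a u b, l1 ≤ a → a ≤ u → u ≤ b → b ≤ l2 → g a b = g a u + g u b)
    (ha : l1 ≤ a) (hab : a ≤ b) (hb : b ≤ l2) {N : ℕ} (hN : N ≠ 0) :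
    riemannSum g N a b = g a b := by
  obtain ⟨n, rfl⟩ := Nat.exists_eq_succ_of_ne_zero hN
  have := sub_riemannSum_eq (B := g) (h := 0) (fun a u b h1 h2 h3 h4 => by
    rw [hg a u b h1 h2 h3 h4]; simp) ha hab hb n
  simp only [Pi.zero_apply, sum_const_zero] at this
  exact (sub_eq_zero.1 this).symm

end Telescope

section GridAdditive

variable {W : Type*} [AddCommGroup W] {l1 l2 a b : ℝ} {I : ℝ → ℝ → W}
  (hI : ∀ a b, l1 ≤ a → a ≤ b → b ≤ l2 → ∀ N ≠ 0, riemannSum I N a b = I a b)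
include hI

lemma self_eq_zero_of_riemannSum_eq (ha : l1 ≤ a) (hb : a ≤ l2) : I a a = 0 := by
  simpa [riemannSum_two] using hI a a ha le_rfl hb 2 two_ne_zero

lemma eq_add_gridPt_of_riemannSum_eq (ha : l1 ≤ a) (hab : a ≤ b) (hb : b ≤ l2) {N k : ℕ}
    (hN : N ≠ 0) (hk : k ≤ N) :
    I a b = I a (gridPt a b N k) + I (gridPt a b N k) b := by
  rcases Nat.eq_zero_or_pos k with rfl | hk0
  · rw [gridPt_zero, self_eq_zero_of_riemannSum_eq hI ha (hab.trans hb), zero_add]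
  rcases hk.eq_or_lt with rfl | hkN
  · rw [gridPt_self a b hN, self_eq_zero_of_riemannSum_eq hI (ha.trans hab) hb, add_zero]
  have hxk := gridPt_le_right hab hN hk
  have hax := left_le_gridPt hab N k
  rw [← hI a _ ha hax (hxk.trans hb) k hk0.ne', ← hI _ b (ha.trans hax) hxk hb (N - k) (by omega),
    ← hI a b ha hab hb N hN]
  simp only [riemannSum, gridPt_left_gridPt hN hk0.ne', gridPt_gridPt_right hkN, ← add_assoc]
  rw [← sum_range_add (fun i => I (gridPt a b N i) (gridPt a b N (i + 1))), Nat.add_sub_cancel' hk]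

variable [TopologicalSpace W] [ContinuousAdd W] [T2Space W]

lemma additive_of_riemannSum_eq
    (hc : ContinuousOn (fun q : ℝ × ℝ => I q.1 q.2) {q : ℝ × ℝ | l1 ≤ q.1 ∧ q.1 ≤ q.2 ∧ q.2 ≤ l2})
    {u : ℝ} (ha : l1 ≤ a) (hau : a ≤ u) (hub : u ≤ b) (hb : b ≤ l2) :
    I a b = I a u + I u b := by
  rcases (hau.trans hub).eq_or_lt with rfl | hab
  · obtain rfl := le_antisymm hau hub
    rw [self_eq_zero_of_riemannSum_eq hI ha hb, add_zero]
  obtain ⟨k, hkn, hk⟩ := exists_tendsto_gridPt hau hub hab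
  have hmem : ∀ v ∈ Icc a b, (a, v) ∈ {q : ℝ × ℝ | l1 ≤ q.1 ∧ q.1 ≤ q.2 ∧ q.2 ≤ l2} ∧
      (v, b) ∈ {q : ℝ × ℝ | l1 ≤ q.1 ∧ q.1 ≤ q.2 ∧ q.2 ≤ l2} :=
    fun v hv => ⟨⟨ha, hv.1, hv.2.trans hb⟩, ⟨ha.trans hv.1, hv.2, hb⟩⟩
  have hcont : ContinuousOn (fun v => I a v + I v b) (Icc a b) :=
    (hc.comp' (Continuous.continuousOn (by fun_prop)) fun v hv => (hmem v hv).1).add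
      (hc.comp' (Continuous.continuousOn (by fun_prop)) fun v hv => (hmem v hv).2)
  have hgrid_mem : ∀ n, gridPt a b n (k n) ∈ Icc a b := fun n => by
    rcases Nat.eq_zero_or_pos n with rfl | hn
    · simp [gridPt, hab.le]
    · exact ⟨left_le_gridPt hab.le _ _, gridPt_le_right hab.le hn.ne' (hkn n)⟩
  have hlim := (hcont u ⟨hau, hub⟩).tendsto.comp
    (tendsto_nhdsWithin_iff.2 ⟨hk, Eventually.of_forall hgrid_mem⟩)
  refine tendsto_nhds_unique (tendsto_const_nhds.congr' ?_) hlim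
  filter_upwards [eventually_ne_atTop 0] with n hn
  exact eq_add_gridPt_of_riemannSum_eq hI ha hab.le hb hn (hkn n)

end GridAdditive

section LinearTsum

variable {K ι M N : Type*} [DivisionRing K] [AddCommGroup M] [Module K M]
  [AddCommGroup N] [Module K N] [TopologicalSpace N] [IsTopologicalAddGroup N]
  [ContinuousConstSMul K N] [T2Space N]

def summableSubmodule (f : ι → M →ₗ[K] N) : Submodule K M where
  carrier := {x | Summable fun i => f i x}
  add_mem' hx hy := by simpa only [Set.mem_ofPred_eq, map_add] using hx.add hy
  zero_mem' := by simpa only [Set.mem_ofPred_eq, map_zero] using summable_zero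
  smul_mem' c x hx := by simpa only [Set.mem_ofPred_eq, map_smul] using hx.const_smul c

def tsumOnSummable (f : ι → M →ₗ[K] N) : summableSubmodule f →ₗ[K] N where
  toFun x := ∑' i, f i x
  map_add' x y := by simpa only [Submodule.coe_add, map_add] using x.2.tsum_add y.2
  map_smul' c x := by
    simpa only [Submodule.coe_smul, map_smul, RingHom.id_apply] using x.2.tsum_const_smul c

lemma exists_linearMap_eq_tsum (f : ι → M →ₗ[K] N) :
    ∃ g : M →ₗ[K] N, ∀ x, (Summable fun i => f i x) → g x = ∑' i, f i x := by
  obtain ⟨g, hg⟩ := LinearMap.exists_extend (tsumOnSummable f)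
  exact ⟨g, fun x hx => LinearMap.congr_fun hg ⟨x, hx⟩⟩

end LinearTsum

lemma mul_div_rpow_eq {n D : ℝ} (hn : 0 < n) (hD : 0 ≤ D) (μ : ℝ) :
    n * (D / n) ^ μ = D ^ μ * n ^ (1 - μ) := by
  rw [Real.div_rpow hD hn.le, Real.rpow_sub hn, Real.rpow_one]
  field_simp

lemma two_pow_mul_div_rpow_eq {D : ℝ} (hD : 0 ≤ D) (μ : ℝ) (j : ℕ) :
    2 ^ j * (D / 2 ^ j) ^ μ = D ^ μ * ((2 : ℝ) ^ (1 - μ)) ^ j := by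
  rw [mul_div_rpow_eq (by positivity) hD, Real.rpow_pow_comm zero_le_two]

lemma two_rpow_one_sub_lt_one {μ : ℝ} (hμ : 1 < μ) : (2 : ℝ) ^ (1 - μ) < 1 :=
  Real.rpow_lt_one_of_one_lt_of_neg one_lt_two (by linarith)

lemma hasSum_mul_two_rpow_one_sub_pow {μ : ℝ} (hμ : 1 < μ) (C : ℝ) :
    HasSum (fun j : ℕ => C * ((2 : ℝ) ^ (1 - μ)) ^ j) (C * (1 - (2 : ℝ) ^ (1 - μ))⁻¹) :=
  (hasSum_geometric_of_lt_one (by positivity) (two_rpow_one_sub_lt_one hμ)).mul_left C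

lemma tendsto_mul_two_rpow_one_sub_pow {μ : ℝ} (hμ : 1 < μ) (C : ℝ) :
    Tendsto (fun m : ℕ => C * ((2 : ℝ) ^ (1 - μ)) ^ m) atTop (𝓝 0) := by
  simpa using (tendsto_pow_atTop_nhds_zero_of_lt_one (by positivity)
    (two_rpow_one_sub_lt_one hμ)).const_mul C

def HolderBound (l1 l2 μ K : ℝ) (h : ℝ → ℝ → ℝ → V) : Prop :=
  ∀ s u t, l1 ≤ s → s ≤ u → u ≤ t → t ≤ l2 → ‖h s u t‖ ≤ K * (t - s) ^ μ

section Dyadic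

variable [NormedSpace ℝ V]

@[simps]
def dyadicRow (s t : ℝ) (j : ℕ) : (ℝ → ℝ → ℝ → V) →ₗ[ℝ] V where
  toFun h := ∑ k ∈ range (2 ^ j), h (gridPt s t (2 ^ j) k)
    ((gridPt s t (2 ^ j) k + gridPt s t (2 ^ j) (k + 1)) / 2) (gridPt s t (2 ^ j) (k + 1))
  map_add' h₁ h₂ := by simp only [Pi.add_apply, sum_add_distrib]
  map_smul' a h := by simp only [Pi.smul_apply, smul_sum, RingHom.id_apply]

def dyadicSum (h : ℝ → ℝ → ℝ → V) (s t : ℝ) : V := ∑' j, dyadicRow s t j h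

variable {l1 l2 μ K : ℝ} {h : ℝ → ℝ → ℝ → V}

lemma dyadic_triple_mem {s t : ℝ} (hs : l1 ≤ s) (hst : s ≤ t) (ht : t ≤ l2) {j k : ℕ}
    (hk : k < 2 ^ j) :
    l1 ≤ gridPt s t (2 ^ j) k ∧
      gridPt s t (2 ^ j) k ≤ (gridPt s t (2 ^ j) k + gridPt s t (2 ^ j) (k + 1)) / 2 ∧
      (gridPt s t (2 ^ j) k + gridPt s t (2 ^ j) (k + 1)) / 2 ≤ gridPt s t (2 ^ j) (k + 1) ∧
      gridPt s t (2 ^ j) (k + 1) ≤ l2 := by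
  have hle := gridPt_mono hst (2 ^ j) (Nat.le_succ k)
  refine ⟨hs.trans (left_le_gridPt hst _ _), by linarith, by linarith, ?_⟩
  exact (gridPt_le_right hst (by positivity) hk).trans ht

lemma dyadicSum_self {t : ℝ} (ht : h t t t = 0) : dyadicSum h t t = 0 := by
  simp [dyadicSum, dyadicRow_apply, gridPt, ht]

section Bounded

variable (hK : HolderBound l1 l2 μ K h)
include hK

lemma norm_dyadicRow_le {s t : ℝ} (hs : l1 ≤ s) (hst : s ≤ t) (ht : t ≤ l2) (j : ℕ) :
    ‖dyadicRow s t j h‖ ≤ K * (t - s) ^ μ * ((2 : ℝ) ^ (1 - μ)) ^ j := by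
  have hterm : ∀ k ∈ range (2 ^ j), ‖h (gridPt s t (2 ^ j) k)
      ((gridPt s t (2 ^ j) k + gridPt s t (2 ^ j) (k + 1)) / 2) (gridPt s t (2 ^ j) (k + 1))‖
      ≤ K * ((t - s) / 2 ^ j) ^ μ := by
    intro k hk
    obtain ⟨h1, h2, h3, h4⟩ := dyadic_triple_mem hs hst ht (mem_range.1 hk)
    simpa [gridPt_succ_sub] using hK _ _ _ h1 h2 h3 h4
  calc ‖dyadicRow s t j h‖ ≤ ∑ k ∈ range (2 ^ j), K * ((t - s) / 2 ^ j) ^ μ :=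
        (norm_sum_le _ _).trans (sum_le_sum hterm)
    _ = K * (2 ^ j * ((t - s) / 2 ^ j) ^ μ) := by simp; ring
    _ = K * (t - s) ^ μ * ((2 : ℝ) ^ (1 - μ)) ^ j := by
        rw [two_pow_mul_div_rpow_eq (sub_nonneg.2 hst)]; ring

lemma norm_dyadicSum_le (hμ : 1 < μ) {s t : ℝ} (hs : l1 ≤ s) (hst : s ≤ t) (ht : t ≤ l2) :
    ‖dyadicSum h s t‖ ≤ K * (t - s) ^ μ * (1 - (2 : ℝ) ^ (1 - μ))⁻¹ :=
  tsum_of_norm_bounded (hasSum_mul_two_rpow_one_sub_pow hμ _) (norm_dyadicRow_le hK hs hst ht)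

variable [CompleteSpace V]

lemma summable_dyadicRow (hμ : 1 < μ) {s t : ℝ} (hs : l1 ≤ s) (hst : s ≤ t) (ht : t ≤ l2) :
    Summable fun j => dyadicRow s t j h :=
  .of_norm_bounded (hasSum_mul_two_rpow_one_sub_pow hμ _).summable
    (norm_dyadicRow_le hK hs hst ht)

lemma continuousOn_dyadicSum (hμ : 1 < μ) (hK0 : 0 ≤ K)
    (hc : ContinuousOn (fun p : ℝ × ℝ × ℝ => h p.1 p.2.1 p.2.2)
      {p : ℝ × ℝ × ℝ | l1 ≤ p.1 ∧ p.1 ≤ p.2.1 ∧ p.2.1 ≤ p.2.2 ∧ p.2.2 ≤ l2}) :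
    ContinuousOn (fun q : ℝ × ℝ => dyadicSum h q.1 q.2)
      {q : ℝ × ℝ | l1 ≤ q.1 ∧ q.1 ≤ q.2 ∧ q.2 ≤ l2} := by
  refine continuousOn_tsum (fun j => ?_)
    (hasSum_mul_two_rpow_one_sub_pow hμ (K * (l2 - l1) ^ μ)).summable ?_
  · simp only [dyadicRow_apply]
    refine continuousOn_finsetSum _ fun k hk => hc.comp' (f := fun q : ℝ × ℝ =>
      (gridPt q.1 q.2 (2 ^ j) k, (gridPt q.1 q.2 (2 ^ j) k + gridPt q.1 q.2 (2 ^ j) (k + 1)) / 2,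
        gridPt q.1 q.2 (2 ^ j) (k + 1))) (Continuous.continuousOn (by unfold gridPt; fun_prop)) ?_
    rintro q ⟨hs, hst, ht⟩
    exact dyadic_triple_mem hs hst ht (mem_range.1 hk)
  · rintro j q ⟨hs, hst, ht⟩
    refine (norm_dyadicRow_le hK hs hst ht j).trans ?_
    gcongr

end Bounded

end Dyadic

section Coboundary

variable {l1 l2 μ K a b : ℝ} {h : ℝ → ℝ → ℝ → V} {B : ℝ → ℝ → V}
  (hB : ∀ a u b, l1 ≤ a → a ≤ u → u ≤ b → b ≤ l2 → B a b - B a u - B u b = h a u b)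
include hB

section

variable [NormedSpace ℝ V]

lemma riemannSum_two_pow (ha : l1 ≤ a) (hab : a ≤ b) (hb : b ≤ l2) (m : ℕ) :
    riemannSum B (2 ^ m) a b = B a b - ∑ j ∈ range m, dyadicRow a b j h := by
  induction m with
  | zero => simp [riemannSum_one]
  | succ m ih =>
    rw [pow_succ, riemannSum_mul B (by positivity) two_ne_zero, sum_range_succ, sub_add_eq_sub_sub,
      ← ih, riemannSum, dyadicRow_apply, ← sum_sub_distrib]
    refine sum_congr rfl fun k hk => ?_
    obtain ⟨h1, h2, h3, h4⟩ := dyadic_triple_mem ha hab hb (mem_range.1 hk)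
    rw [riemannSum_two, ← hB _ _ _ h1 h2 h3 h4]
    abel

end

variable (hK : HolderBound l1 l2 μ K h)
include hK

lemma norm_riemannSum_sub_le (hμ : 0 ≤ μ) (hK0 : 0 ≤ K) (ha : l1 ≤ a) (hab : a ≤ b)
    (hb : b ≤ l2) {N : ℕ} (hN : N ≠ 0) :
    ‖riemannSum B N a b - B a b‖ ≤ N * (K * (b - a) ^ μ) := by
  obtain ⟨n, rfl⟩ := Nat.exists_eq_succ_of_ne_zero hN
  have hterm : ∀ i ∈ range n,
      ‖h a (gridPt a b (n + 1) (i + 1)) (gridPt a b (n + 1) (i + 2))‖ ≤ K * (b - a) ^ μ := by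
    intro i hi
    have hi := mem_range.1 hi
    have hv := gridPt_le_right hab n.succ_ne_zero (show i + 2 ≤ n + 1 by omega)
    refine (hK _ _ _ ha (left_le_gridPt hab _ _) (gridPt_mono hab _ (Nat.le_succ _))
      (hv.trans hb)).trans ?_
    gcongr
    linarith [left_le_gridPt hab (n + 1) (i + 2)]
  rw [norm_sub_rev, sub_riemannSum_eq hB ha hab hb]
  calc _ ≤ ∑ i ∈ range n, K * (b - a) ^ μ := (norm_sum_le _ _).trans (sum_le_sum hterm)
    _ ≤ _ := by
      rw [sum_const, card_range, nsmul_eq_mul]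
      gcongr
      simp

lemma norm_riemannSum_two_pow_mul_sub_le (hμ : 0 ≤ μ) (hK0 : 0 ≤ K) (ha : l1 ≤ a)
    (hab : a ≤ b) (hb : b ≤ l2) {N : ℕ} (hN : N ≠ 0) (m : ℕ) :
    ‖riemannSum B (2 ^ m * N) a b - riemannSum B (2 ^ m) a b‖ ≤
      N * K * (b - a) ^ μ * ((2 : ℝ) ^ (1 - μ)) ^ m := by
  rw [riemannSum_mul B (by positivity) hN, riemannSum, ← sum_sub_distrib]
  calc _ ≤ ∑ k ∈ range (2 ^ m), N * (K * ((b - a) / 2 ^ m) ^ μ) := by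
        refine (norm_sum_le _ _).trans (sum_le_sum fun k hk => ?_)
        have hk := mem_range.1 hk
        have := norm_riemannSum_sub_le hB hK hμ hK0 (ha.trans (left_le_gridPt hab _ _))
          (gridPt_mono hab _ (Nat.le_succ k))
          ((gridPt_le_right hab (by positivity) hk).trans hb) hN
        simpa [gridPt_succ_sub] using this
    _ = N * K * (2 ^ m * ((b - a) / 2 ^ m) ^ μ) := by simp; ring
    _ = _ := by rw [two_pow_mul_div_rpow_eq (sub_nonneg.2 hab)]; ring

variable [NormedSpace ℝ V] [CompleteSpace V]

lemma tendsto_riemannSum_two_pow (hμ : 1 < μ) (ha : l1 ≤ a) (hab : a ≤ b) (hb : b ≤ l2) :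
    Tendsto (fun m => riemannSum B (2 ^ m) a b) atTop (𝓝 (B a b - dyadicSum h a b)) := by
  simp_rw [riemannSum_two_pow hB ha hab hb]
  exact ((summable_dyadicRow hK hμ ha hab hb).hasSum.tendsto_sum_nat).const_sub _

/-- The Riemann sums of `B` on `N · 2 ^ m` equal pieces tend to `∑ᵢ (B - Λ)(piece i)` by refining
each of the `N` pieces dyadically, and to `(B - Λ) a b` since they are within
`O(2 ^ (m (1 - μ)))` of the dyadic Riemann sums. -/
lemma riemannSum_sub_dyadicSum (hμ : 1 < μ) (hK0 : 0 ≤ K) (ha : l1 ≤ a) (hab : a ≤ b)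
    (hb : b ≤ l2) {N : ℕ} (hN : N ≠ 0) :
    riemannSum (B - dyadicSum h) N a b = B a b - dyadicSum h a b := by
  have hpieces : Tendsto (fun m => riemannSum B (N * 2 ^ m) a b) atTop
      (𝓝 (riemannSum (B - dyadicSum h) N a b)) := by
    simp_rw [riemannSum_mul B hN (by positivity : 2 ^ _ ≠ 0)]
    refine tendsto_finsetSum _ fun i hi => ?_
    exact tendsto_riemannSum_two_pow hB hK hμ (ha.trans (left_le_gridPt hab _ _))
      (gridPt_mono hab _ (Nat.le_succ i))
      ((gridPt_le_right hab hN (mem_range.1 hi)).trans hb)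
  have hdyadic : Tendsto (fun m => riemannSum B (2 ^ m * N) a b) atTop
      (𝓝 (B a b - dyadicSum h a b)) := by
    have hdiff := squeeze_zero_norm
      (norm_riemannSum_two_pow_mul_sub_le hB hK (by linarith) hK0 ha hab hb hN)
      (tendsto_mul_two_rpow_one_sub_pow hμ _)
    simpa using hdiff.add (tendsto_riemannSum_two_pow hB hK hμ ha hab hb)
  simp_rw [mul_comm (2 ^ _) N] at hdyadic
  exact tendsto_nhds_unique hpieces hdyadic

end Coboundary

section Holder

variable {l1 l2 μ : ℝ}

lemma iSup_le_ofReal_of_norm_le {F : ℝ → ℝ → V} {C : ℝ}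
    (hF : ∀ s t, l1 ≤ s → s < t → t ≤ l2 → ‖F s t‖ ≤ C * (t - s) ^ μ) :
    (⨆ p : {p : ℝ × ℝ // l1 ≤ p.1 ∧ p.1 < p.2 ∧ p.2 ≤ l2},
      ENNReal.ofReal (‖F p.1.1 p.1.2‖ / (p.1.2 - p.1.1) ^ μ)) ≤ ENNReal.ofReal C := by
  refine iSup_le fun ⟨⟨s, t⟩, hs, hst, ht⟩ => ENNReal.ofReal_le_ofReal ?_
  rw [div_le_iff₀ (Real.rpow_pos_of_pos (sub_pos.2 hst) μ)]
  exact hF s t hs hst ht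

lemma exists_norm_le_of_iSup_lt_top {F : ℝ → ℝ → V}
    (hF : (⨆ p : {p : ℝ × ℝ // l1 ≤ p.1 ∧ p.1 < p.2 ∧ p.2 ≤ l2},
      ENNReal.ofReal (‖F p.1.1 p.1.2‖ / (p.1.2 - p.1.1) ^ μ)) < ⊤) :
    ∃ C, ∀ s t, l1 ≤ s → s < t → t ≤ l2 → ‖F s t‖ ≤ C * (t - s) ^ μ := by
  refine ⟨(⨆ p : {p : ℝ × ℝ // l1 ≤ p.1 ∧ p.1 < p.2 ∧ p.2 ≤ l2},
    ENNReal.ofReal (‖F p.1.1 p.1.2‖ / (p.1.2 - p.1.1) ^ μ)).toReal, fun s t hs hst ht => ?_⟩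
  have hle := (le_iSup (fun p : {p : ℝ × ℝ // l1 ≤ p.1 ∧ p.1 < p.2 ∧ p.2 ≤ l2} =>
    ENNReal.ofReal (‖F p.1.1 p.1.2‖ / (p.1.2 - p.1.1) ^ μ)) ⟨(s, t), hs, hst, ht⟩)
  rw [ENNReal.ofReal_le_iff_le_toReal hF.ne,
    div_le_iff₀ (Real.rpow_pos_of_pos (sub_pos.2 hst) μ)] at hle
  exact hle

lemma eq_zero_of_additive_of_norm_le (hμ : 1 < μ) {g : ℝ → ℝ → V} {C : ℝ}
    (hg : ∀ a u b, l1 ≤ a → a ≤ u → u ≤ b → b ≤ l2 → g a b = g a u + g u b)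
    (hC : ∀ a b, l1 ≤ a → a < b → b ≤ l2 → ‖g a b‖ ≤ C * (b - a) ^ μ)
    {a b : ℝ} (ha : l1 ≤ a) (hab : a ≤ b) (hb : b ≤ l2) : g a b = 0 := by
  have hI : ∀ a b, l1 ≤ a → a ≤ b → b ≤ l2 → ∀ N ≠ 0, riemannSum g N a b = g a b :=
    fun a b ha hab hb N hN => riemannSum_eq_of_additive hg ha hab hb hN
  rcases hab.eq_or_lt with rfl | hab
  · exact self_eq_zero_of_riemannSum_eq hI ha hb
  have hbound : ∀ m : ℕ, ‖g a b‖ ≤ C * (b - a) ^ μ * ((2 : ℝ) ^ (1 - μ)) ^ m := by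
    intro m
    rw [← hI a b ha hab.le hb (2 ^ m) (by positivity), riemannSum]
    calc _ ≤ ∑ k ∈ range (2 ^ m), C * ((b - a) / 2 ^ m) ^ μ := by
          refine (norm_sum_le _ _).trans (sum_le_sum fun k hk => ?_)
          have hlt : gridPt a b (2 ^ m) k < gridPt a b (2 ^ m) (k + 1) := by
            rw [← sub_pos, gridPt_succ_sub]; simp [hab]
          simpa [gridPt_succ_sub] using hC _ _ (ha.trans (left_le_gridPt hab.le _ _)) hlt
            ((gridPt_le_right hab.le (by positivity) (mem_range.1 hk)).trans hb)
      _ = C * (2 ^ m * ((b - a) / 2 ^ m) ^ μ) := by simp; ring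
      _ = _ := by rw [two_pow_mul_div_rpow_eq (sub_nonneg.2 hab.le)]; ring
  exact norm_le_zero_iff.1 (ge_of_tendsto' (tendsto_mul_two_rpow_one_sub_pow hμ _) hbound)

lemma IsSewing.congr {h : ℝ → ℝ → ℝ → V} {Λ Λ' : ℝ → ℝ → V} (hΛ : IsSewing l1 l2 μ h Λ)
    (heq : ∀ s t, l1 ≤ s → s ≤ t → t ≤ l2 → Λ s t = Λ' s t) : IsSewing l1 l2 μ h Λ' := by
  obtain ⟨hc, hdiag, hsup, hδ⟩ := hΛ
  refine ⟨hc.congr fun q hq => (heq _ _ hq.1 hq.2.1 hq.2.2).symm, fun t h1 h2 => ?_, ?_,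
    fun s u t h1 h2 h3 h4 => ?_⟩
  · rw [← heq t t h1 le_rfl h2, hdiag t h1 h2]
  · convert hsup using 4 with p
    rw [heq _ _ p.2.1 p.2.2.1.le p.2.2.2]
  · rw [← heq _ _ h1 (h2.trans h3) h4, ← heq _ _ h1 h2 (h3.trans h4),
      ← heq _ _ (h1.trans h2) h3 h4, hδ s u t h1 h2 h3 h4]

lemma IsSewing.unique (hμ : 1 < μ) {h : ℝ → ℝ → ℝ → V} {Λ Λ' : ℝ → ℝ → V}
    (hΛ : IsSewing l1 l2 μ h Λ) (hΛ' : IsSewing l1 l2 μ h Λ') {s t : ℝ} (hs : l1 ≤ s)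
    (hst : s ≤ t) (ht : t ≤ l2) : Λ s t = Λ' s t := by
  obtain ⟨C, hC⟩ := exists_norm_le_of_iSup_lt_top hΛ.2.2.1
  obtain ⟨C', hC'⟩ := exists_norm_le_of_iSup_lt_top hΛ'.2.2.1
  refine sub_eq_zero.1 (eq_zero_of_additive_of_norm_le hμ (g := Λ - Λ') (C := C + C')
    (fun a u b h1 h2 h3 h4 => ?_) (fun a b h1 h2 h3 => ?_) hs hst ht)
  · have hδ := hΛ.2.2.2 a u b h1 h2 h3 h4
    have hδ' := hΛ'.2.2.2 a u b h1 h2 h3 h4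
    simp only [Pi.sub_apply]
    linear_combination (norm := module) hδ - hδ'
  · simp only [Pi.sub_apply]
    refine (norm_sub_le _ _).trans ?_
    rw [add_mul]
    exact add_le_add (hC a b h1 h2 h3) (hC' a b h1 h2 h3)

end Holder

lemma coboundary_of_delta_eq_zero {l1 l2 : ℝ} {h : ℝ → ℝ → ℝ → V}
    (hδ : ∀ s u v t, l1 ≤ s → s ≤ u → u ≤ v → v ≤ t → t ≤ l2 →
      h u v t - h s v t + h s u t - h s u v = 0)
    {a u b : ℝ} (ha : l1 ≤ a) (hau : a ≤ u) (hub : u ≤ b) (hb : b ≤ l2) :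
    -h l1 a b - -h l1 a u - -h l1 u b = h a u b := by
  linear_combination (norm := module) -hδ l1 a u b le_rfl ha hau hub hb

section Sewing

variable [NormedSpace ℝ V]

/- The dyadic series is linear in `h` only where it converges; extending it linearly from
there makes `h ↦ Λh` linear on all of `ℝ → ℝ → ℝ → V`. -/
variable (V) in
def sewingMap (h : ℝ → ℝ → ℝ → V) (s t : ℝ) : V :=
  (exists_linearMap_eq_tsum (dyadicRow (V := V) s t)).choose h

lemma sewingMap_add (h₁ h₂ : ℝ → ℝ → ℝ → V) :
    sewingMap V (h₁ + h₂) = sewingMap V h₁ + sewingMap V h₂ := by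
  ext s t
  simp only [sewingMap, map_add, Pi.add_apply]

lemma sewingMap_smul (a : ℝ) (h : ℝ → ℝ → ℝ → V) : sewingMap V (a • h) = a • sewingMap V h := by
  ext s t
  simp only [sewingMap, map_smul, Pi.smul_apply]

variable [CompleteSpace V] {l1 l2 μ K : ℝ} {h : ℝ → ℝ → ℝ → V}

lemma isSewing_dyadicSum (hμ : 1 < μ) (hinc : IsTwoIncrement l1 l2 h)
    (hδ : ∀ s u v t, l1 ≤ s → s ≤ u → u ≤ v → v ≤ t → t ≤ l2 →
      h u v t - h s v t + h s u t - h s u v = 0)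
    (hK0 : 0 ≤ K) (hK : HolderBound l1 l2 μ K h) :
    IsSewing l1 l2 μ h (dyadicSum h) := by
  obtain ⟨hc, hdeg⟩ := hinc
  set B : ℝ → ℝ → V := fun a b => -h l1 a b
  have hB : ∀ a u b, l1 ≤ a → a ≤ u → u ≤ b → b ≤ l2 → B a b - B a u - B u b = h a u b :=
    fun a u b => coboundary_of_delta_eq_zero hδ
  have hBc : ContinuousOn (fun q : ℝ × ℝ => B q.1 q.2)
      {q : ℝ × ℝ | l1 ≤ q.1 ∧ q.1 ≤ q.2 ∧ q.2 ≤ l2} :=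
    (hc.comp' (f := fun q : ℝ × ℝ => (l1, q.1, q.2)) (Continuous.continuousOn (by fun_prop))
      fun q hq => ⟨le_rfl, hq⟩).neg
  have hΛc := continuousOn_dyadicSum hK hμ hK0 hc
  refine ⟨hΛc, fun t h1 h2 => dyadicSum_self (hdeg t t t h1 le_rfl le_rfl h2 (Or.inl rfl)),
    (iSup_le_ofReal_of_norm_le (C := K * (1 - (2 : ℝ) ^ (1 - μ))⁻¹) fun s t hs hst ht =>
      (norm_dyadicSum_le hK hμ hs hst.le ht).trans_eq (by ring)).trans_lt ENNReal.ofReal_lt_top,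
    fun s u t h1 h2 h3 h4 => ?_⟩
  have := additive_of_riemannSum_eq (I := B - dyadicSum h)
    (fun a b ha hab hb N hN => riemannSum_sub_dyadicSum hB hK hμ hK0 ha hab hb hN)
    (hBc.sub hΛc) h1 h2 h3 h4
  simp only [Pi.sub_apply] at this
  linear_combination (norm := module) hB s u t h1 h2 h3 h4 - this

lemma sewingMap_eq_dyadicSum (hμ : 1 < μ) (hK : HolderBound l1 l2 μ K h) {s t : ℝ}
    (hs : l1 ≤ s) (hst : s ≤ t) (ht : t ≤ l2) : sewingMap V h s t = dyadicSum h s t :=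
  (exists_linearMap_eq_tsum (dyadicRow (V := V) s t)).choose_spec h
    (summable_dyadicRow hK hμ hs hst ht)

lemma isSewing_sewingMap (hμ : 1 < μ) (hinc : IsTwoIncrement l1 l2 h)
    (hδ : ∀ s u v t, l1 ≤ s → s ≤ u → u ≤ v → v ≤ t → t ≤ l2 →
      h u v t - h s v t + h s u t - h s u v = 0)
    (hK0 : 0 ≤ K) (hK : HolderBound l1 l2 μ K h) :
    IsSewing l1 l2 μ h (sewingMap V h) :=
  (isSewing_dyadicSum hμ hinc hδ hK0 hK).congr fun _ _ hs hst ht =>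
    (sewingMap_eq_dyadicSum hμ hK hs hst ht).symm

lemma iSup_sewingMap_le (hμ : 1 < μ) (hK : HolderBound l1 l2 μ K h) :
    (⨆ p : {p : ℝ × ℝ // l1 ≤ p.1 ∧ p.1 < p.2 ∧ p.2 ≤ l2},
      ENNReal.ofReal (‖sewingMap V h p.1.1 p.1.2‖ / (p.1.2 - p.1.1) ^ μ)) ≤
      ENNReal.ofReal (K * (1 - (2 : ℝ) ^ (1 - μ))⁻¹) :=
  iSup_le_ofReal_of_norm_le fun s t hs hst ht => by
    rw [sewingMap_eq_dyadicSum hμ hK hs hst.le ht]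
    exact (norm_dyadicSum_le hK hμ hs hst.le ht).trans_eq (by ring)

end Sewing

section MuNorm

variable {l1 l2 μ : ℝ} {h : ℝ → ℝ → ℝ → V}

lemma norm_le_twoIncNorm_mul {ρ σ : ℝ} (hinc : IsTwoIncrement l1 l2 h)
    (hfin : twoIncNorm l1 l2 ρ σ h ≠ ⊤) {s u t : ℝ} (hs : l1 ≤ s) (hsu : s ≤ u) (hut : u ≤ t)
    (ht : t ≤ l2) : ‖h s u t‖ ≤ (twoIncNorm l1 l2 ρ σ h).toReal * ((u - s) ^ ρ * (t - u) ^ σ) := by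
  by_cases hdeg : s = u ∨ u = t
  · rw [hinc.2 s u t hs hsu hut ht hdeg, norm_zero]
    have := Real.rpow_nonneg (sub_nonneg.2 hsu) ρ
    have := Real.rpow_nonneg (sub_nonneg.2 hut) σ
    positivity
  push Not at hdeg
  have hpos : 0 < (u - s) ^ ρ * (t - u) ^ σ :=
    mul_pos (Real.rpow_pos_of_pos (sub_pos.2 (hsu.lt_of_ne hdeg.1)) ρ)
      (Real.rpow_pos_of_pos (sub_pos.2 (hut.lt_of_ne hdeg.2)) σ)
  have hle : ENNReal.ofReal (‖h s u t‖ / ((u - s) ^ ρ * (t - u) ^ σ)) ≤ twoIncNorm l1 l2 ρ σ h :=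
    le_iSup (fun p : {p : ℝ × ℝ × ℝ // l1 ≤ p.1 ∧ p.1 ≤ p.2.1 ∧ p.2.1 ≤ p.2.2 ∧ p.2.2 ≤ l2} =>
      ENNReal.ofReal (‖h p.1.1 p.1.2.1 p.1.2.2‖ /
        ((p.1.2.1 - p.1.1) ^ ρ * (p.1.2.2 - p.1.2.1) ^ σ)))
      ⟨(s, u, t), hs, hsu, hut, ht⟩
  rw [ENNReal.ofReal_le_iff_le_toReal hfin, div_le_iff₀ hpos] at hle
  exact hle

lemma holderBound_of_hasSum_twoIncrement {hs : ℕ → ℝ → ℝ → ℝ → V} {ρ : ℕ → ℝ}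
    (hinc : ∀ i, IsTwoIncrement l1 l2 (hs i)) (hρ : ∀ i, 0 < ρ i ∧ ρ i < μ)
    (hsum : ∀ s u t, l1 ≤ s → s ≤ u → u ≤ t → t ≤ l2 → HasSum (fun i => hs i s u t) (h s u t))
    (hfin : ∑' i, twoIncNorm l1 l2 (ρ i) (μ - ρ i) (hs i) ≠ ⊤) :
    HolderBound l1 l2 μ (∑' i, twoIncNorm l1 l2 (ρ i) (μ - ρ i) (hs i)).toReal h := by
  intro s u t h1 h2 h3 h4
  have hfin_i := ENNReal.ne_top_of_tsum_ne_top hfin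
  have hmono : ∀ i, (u - s) ^ ρ i * (t - u) ^ (μ - ρ i) ≤ (t - s) ^ μ := fun i => by
    have hρ0 := (hρ i).1.le
    have hρμ := sub_nonneg.2 (hρ i).2.le
    calc _ ≤ (t - s) ^ ρ i * (t - s) ^ (μ - ρ i) :=
          mul_le_mul (by gcongr) (by gcongr)
            (Real.rpow_nonneg (by linarith) _) (Real.rpow_nonneg (by linarith) _)
      _ = (t - s) ^ μ := by
          rw [← Real.rpow_add_of_nonneg (by linarith) hρ0 hρμ, add_sub_cancel]
  rw [← (hsum s u t h1 h2 h3 h4).tsum_eq, ENNReal.tsum_toReal_eq hfin_i]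
  refine tsum_of_norm_bounded ((ENNReal.summable_toReal hfin).hasSum.mul_right _) fun i => ?_
  exact (norm_le_twoIncNorm_mul (hinc i) (hfin_i i) h1 h2 h3 h4).trans
    (mul_le_mul_of_nonneg_left (hmono i) ENNReal.toReal_nonneg)

lemma exists_holderBound_of_muNorm_lt_top (hmu : muNorm l1 l2 μ h < ⊤) :
    ∃ K, 0 ≤ K ∧ HolderBound l1 l2 μ K h := by
  simp only [muNorm, iInf_lt_iff] at hmu
  obtain ⟨hs, ρ, hinc, hρ, hsum, hfin⟩ := hmu
  exact ⟨_, ENNReal.toReal_nonneg, holderBound_of_hasSum_twoIncrement hinc hρ hsum hfin.ne⟩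

lemma le_mul_muNorm {X a : ℝ≥0∞} (ha0 : a ≠ 0) (hat : a ≠ ⊤)
    (hX : ∀ (hs : ℕ → ℝ → ℝ → ℝ → V) (ρ : ℕ → ℝ), (∀ i, IsTwoIncrement l1 l2 (hs i)) →
      (∀ i, 0 < ρ i ∧ ρ i < μ) →
      (∀ s u t, l1 ≤ s → s ≤ u → u ≤ t → t ≤ l2 → HasSum (fun i => hs i s u t) (h s u t)) →
      X ≤ a * ∑' i, twoIncNorm l1 l2 (ρ i) (μ - ρ i) (hs i)) :
    X ≤ a * muNorm l1 l2 μ h := by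
  simp only [muNorm, ENNReal.mul_iInf_of_ne ha0 hat, le_iInf_iff]
  exact hX

end MuNorm

/-- **The sewing map.** For `μ > 1` there is a constant `c_μ`, depending only on `μ`, such that
for every Banach space `V`, every interval `[l1, l2]` and every 2-increment `h` with `δh = 0`
and `‖h‖_μ < ∞`, there is a unique continuous map `Λh` on the simplex, vanishing on the diagonal,
with finite `μ`-Hölder sup and `(Λh)_{st} - (Λh)_{su} - (Λh)_{ut} = h_{sut}`; moreover
`h ↦ Λh` is linear and `sup_{s<t} ‖(Λh)_{st}‖/(t-s)^μ ≤ c_μ ‖h‖_μ`. -/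
theorem sewing_map (μ : ℝ) (hμ : 1 < μ) :
    ∃ c : ℝ, 0 < c ∧
      ∀ (V : Type) (_i1 : NormedAddCommGroup V) (_i2 : NormedSpace ℝ V)
        (_i3 : CompleteSpace V),
      ∃ L : (ℝ → ℝ → ℝ → V) → (ℝ → ℝ → V),
        (∀ h₁ h₂ : ℝ → ℝ → ℝ → V, L (h₁ + h₂) = L h₁ + L h₂) ∧
        (∀ (a : ℝ) (h : ℝ → ℝ → ℝ → V), L (a • h) = a • L h) ∧
        ∀ (l1 l2 : ℝ), l1 < l2 →
          ∀ h : ℝ → ℝ → ℝ → V, IsTwoIncrement l1 l2 h →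
            (∀ s u v t : ℝ, l1 ≤ s → s ≤ u → u ≤ v → v ≤ t → t ≤ l2 →
              h u v t - h s v t + h s u t - h s u v = 0) →
            muNorm l1 l2 μ h < ⊤ →
            IsSewing l1 l2 μ h (L h) ∧
            (⨆ p : {p : ℝ × ℝ // l1 ≤ p.1 ∧ p.1 < p.2 ∧ p.2 ≤ l2},
                ENNReal.ofReal (‖L h p.1.1 p.1.2‖ / (p.1.2 - p.1.1) ^ μ))
              ≤ ENNReal.ofReal c * muNorm l1 l2 μ h ∧
            ∀ Λ' : ℝ → ℝ → V, IsSewing l1 l2 μ h Λ' →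
              ∀ s t : ℝ, l1 ≤ s → s ≤ t → t ≤ l2 → Λ' s t = L h s t := by
  have hc : 0 < (1 - (2 : ℝ) ^ (1 - μ))⁻¹ := inv_pos.2 (sub_pos.2 (two_rpow_one_sub_lt_one hμ))
  have hc0 : ENNReal.ofReal (1 - (2 : ℝ) ^ (1 - μ))⁻¹ ≠ 0 := (ENNReal.ofReal_pos.2 hc).ne'
  refine ⟨_, hc, fun V _ _ _ => ⟨sewingMap V, sewingMap_add, sewingMap_smul,
    fun l1 l2 _ h hinc hδ hmu => ?_⟩⟩
  obtain ⟨K, hK0, hK⟩ := exists_holderBound_of_muNorm_lt_top hmu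
  have hsew := isSewing_sewingMap hμ hinc hδ hK0 hK
  refine ⟨hsew, le_mul_muNorm hc0 ENNReal.ofReal_ne_top fun hs ρ hinc' hρ hsum => ?_,
    fun Λ' hΛ' s t hs hst ht => hΛ'.unique hμ hsew hs hst ht⟩
  set S := ∑' i, twoIncNorm l1 l2 (ρ i) (μ - ρ i) (hs i)
  rcases eq_or_ne S ⊤ with hS | hS
  · rw [hS, ENNReal.mul_top hc0]
    exact le_top
  calc _ ≤ ENNReal.ofReal (S.toReal * (1 - (2 : ℝ) ^ (1 - μ))⁻¹) :=
        iSup_sewingMap_le hμ (holderBound_of_hasSum_twoIncrement hinc' hρ hsum hS)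
    _ = _ := by rw [ENNReal.ofReal_mul ENNReal.toReal_nonneg, ENNReal.ofReal_toReal hS, mul_comm]

end
end

section
/- Integration of small increments (Corollary 2.2): Let V be a Banach space, ℓ₁ < ℓ₂, and μ > 1. Let g : {(s,t) : ℓ₁ ≤ s ≤ t ≤ ℓ₂} → V be continuous, vanishing on the diagonal, such that ‖δg‖_μ < ∞, where (δg)_{sut} := g_{st} − g_{su} − g_{ut}. Then there exists a function f : [ℓ₁,ℓ₂] → V such that for all ℓ₁ ≤ s ≤ t ≤ ℓ₂: (i) ‖f_t − f_s − g_{st}‖ ≤ c_μ ‖δg‖_μ (t−s)^μ for a constant c_μ depending only on μ, and (ii) f_t − f_s = lim Σ_{i=0}^{N−1} g_{t_i t_{i+1}}, the limit being taken over partitions {s = t_0 < t_1 < ⋯ < t_N = t} of [s,t] whose mesh tends to zero. -/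
open Set
open scoped ENNReal

noncomputable section

variable {V : Type*} [NormedAddCommGroup V]

/-- The coboundary `δg` of a 1-increment `g`: `(δg)_{sut} = g_{st} - g_{su} - g_{ut}`. -/
def deltaInc (g : ℝ → ℝ → V) : ℝ → ℝ → ℝ → V :=
  fun s u t => g s t - g s u - g u t


/-!
Finiteness of `‖δg‖_μ` gives the pointwise bound `‖δg_{sut}‖ ≤ ‖δg‖_μ (t - s)^μ`. By Young's
argument (repeatedly delete a partition point whose two neighbours are close), the Riemann sum of
`g` along any partition of `[s, t]` then differs from `g_{st}` by at most `c_μ ‖δg‖_μ (t - s)^μ`.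
Applying this on every interval of a common refinement, two partitions of `[s, t]` with meshes
`δ, δ'` give Riemann sums within `c_μ ‖δg‖_μ (δ^(μ-1) + δ'^(μ-1)) (t - s)`. By completeness the sums
converge to some `Λ_{st}`, which is additive in the interval, and `f_t = Λ_{l1 t}` works.
-/

open Finset Filter Topology

section MuNorm

variable {l1 l2 μ s u t : ℝ}

lemma IsTwoIncrement.enorm_le_twoIncNorm_mul {k : ℝ → ℝ → ℝ → V} (hk : IsTwoIncrement l1 l2 k)
    {ρ : ℝ} (hρ : 0 ≤ ρ) (hρμ : ρ ≤ μ) (hs : l1 ≤ s) (hsu : s ≤ u) (hut : u ≤ t) (ht : t ≤ l2) :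
    ‖k s u t‖ₑ ≤ twoIncNorm l1 l2 ρ (μ - ρ) k * ENNReal.ofReal ((t - s) ^ μ) := by
  rcases hsu.eq_or_lt with rfl | hsu'
  · simp [hk.2 s s t hs le_rfl hut ht (Or.inl rfl)]
  rcases hut.eq_or_lt with rfl | hut'
  · simp [hk.2 s u u hs hsu le_rfl ht (Or.inr rfl)]
  have hus := sub_pos.2 hsu'
  have htu := sub_pos.2 hut'
  have hts : 0 < t - s := by linarith
  have hμρ := sub_nonneg.2 hρμ
  set D := (u - s) ^ ρ * (t - u) ^ (μ - ρ)
  have hD : 0 < D := by positivity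
  have hDle : D ≤ (t - s) ^ μ :=
    calc (u - s) ^ ρ * (t - u) ^ (μ - ρ) ≤ (t - s) ^ ρ * (t - s) ^ (μ - ρ) := by
          gcongr
      _ = (t - s) ^ μ := by rw [← Real.rpow_add hts, add_sub_cancel]
  have hsup : ENNReal.ofReal (‖k s u t‖ / D) ≤ twoIncNorm l1 l2 ρ (μ - ρ) k :=
    le_iSup_of_le ⟨(s, u, t), hs, hsu, hut, ht⟩ le_rfl
  calc ‖k s u t‖ₑ = ENNReal.ofReal (‖k s u t‖ / D) * ENNReal.ofReal D := by
        rw [← ENNReal.ofReal_mul (by positivity), div_mul_cancel₀ _ hD.ne', ofReal_norm]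
    _ ≤ _ := mul_le_mul' hsup (ENNReal.ofReal_le_ofReal hDle)

theorem norm_le_muNorm_toReal_mul_rpow {h : ℝ → ℝ → ℝ → V} (hfin : muNorm l1 l2 μ h ≠ ⊤)
    (hs : l1 ≤ s) (hsu : s ≤ u) (hut : u ≤ t) (ht : t ≤ l2) :
    ‖h s u t‖ ≤ (muNorm l1 l2 μ h).toReal * (t - s) ^ μ := by
  set c := ENNReal.ofReal ((t - s) ^ μ)
  have key : ‖h s u t‖ₑ / c ≤ muNorm l1 l2 μ h := by
    simp only [muNorm, le_iInf_iff]
    intro hs' ρ hinc hρ hsum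
    refine ENNReal.div_le_of_le_mul ?_
    rw [← ENNReal.tsum_mul_right]
    refine (hsum s u t hs hsu hut ht).enorm_le_of_bounded ENNReal.summable.hasSum fun i => ?_
    exact (hinc i).enorm_le_twoIncNorm_mul (hρ i).1.le (hρ i).2.le hs hsu hut ht
  rw [ENNReal.div_le_iff_le_mul (Or.inr hfin) (Or.inl ENNReal.ofReal_ne_top)] at key
  have := ENNReal.toReal_mono (ENNReal.mul_ne_top hfin ENNReal.ofReal_ne_top) key
  rwa [toReal_enorm, ENNReal.toReal_mul, ENNReal.toReal_ofReal
    (Real.rpow_nonneg (sub_nonneg.2 (hsu.trans hut)) _)] at this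

end MuNorm

theorem exists_norm_sub_le_of_norm_sub_le_add {ι E : Type*} [NormedAddCommGroup E] [CompleteSpace E]
    (S : ι → E) (e : ι → ℝ) (he : ∀ ε > 0, ∃ i, e i ≤ ε) (hS : ∀ i j, ‖S i - S j‖ ≤ e i + e j) :
    ∃ L, ∀ i, ‖L - S i‖ ≤ e i := by
  have hlim := tendsto_one_div_add_atTop_nhds_zero_nat (𝕜 := ℝ)
  choose u hu using fun n : ℕ => he (1 / (n + 1)) Nat.one_div_pos_of_nat
  have hcauchy : CauchySeq fun n => S (u n) := by
    refine cauchySeq_of_le_tendsto_0 (fun N : ℕ => 2 * (1 / ((N : ℝ) + 1)))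
      (fun n m N hn hm => ?_) (by simpa using hlim.const_mul 2)
    have h₁ : 1 / ((n : ℝ) + 1) ≤ 1 / (N + 1) := Nat.one_div_le_one_div hn
    have h₂ : 1 / ((m : ℝ) + 1) ≤ 1 / (N + 1) := Nat.one_div_le_one_div hm
    rw [dist_eq_norm]
    linarith [hS (u n) (u m), hu n, hu m]
  obtain ⟨L, hL⟩ := cauchySeq_tendsto_of_complete hcauchy
  refine ⟨L, fun i => le_of_tendsto_of_tendsto' ((hL.sub_const (S i)).norm)
    (by simpa using hlim.add_const (e i)) fun n => ?_⟩
  rw [← one_div]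
  linarith [hS (u n) i, hu n]

theorem exists_pos_mul_rpow_le (C : ℝ) {p ε : ℝ} (hp : 0 < p) (hε : 0 < ε) :
    ∃ δ > 0, C * δ ^ p ≤ ε := by
  have h : Tendsto (fun δ : ℝ => C * δ ^ p) (𝓝[>] 0) (𝓝 0) := by
    have := (Real.continuousAt_rpow_const 0 p (Or.inr hp.le)).tendsto.mono_left
      (nhdsWithin_le_nhds (s := Set.Ioi 0))
    simpa [Real.zero_rpow hp.ne'] using this.const_mul C
  obtain ⟨δ, hδε, hδ⟩ := ((h.eventually (ge_mem_nhds hε)).and self_mem_nhdsWithin).exists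
  exact ⟨δ, hδ, hδε⟩

/-- A partition `s = x 0 ≤ x 1 ≤ ⋯ ≤ x n = t`, repeated points allowed. Monotonicity is asked on
all of `ℕ`, although the values of `x` past `n` play no role. -/
structure IntervalPartition (s t : ℝ) where
  n : ℕ
  x : ℕ → ℝ
  monotone : Monotone x
  x_zero : x 0 = s
  x_n : x n = t

namespace IntervalPartition

variable {s t u : ℝ}

section Points

variable (P : IntervalPartition s t)

lemma le (P : IntervalPartition s t) : s ≤ t := by
  simpa only [P.x_zero, P.x_n] using P.monotone (Nat.zero_le P.n)

lemma eq_of_n_eq_zero (h : P.n = 0) : s = t := by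
  simpa only [h, P.x_zero] using P.x_n

lemma left_le_x (i : ℕ) : s ≤ P.x i := by
  simpa only [P.x_zero] using P.monotone (Nat.zero_le i)

lemma x_le_right {i : ℕ} (hi : i ≤ P.n) : P.x i ≤ t := by
  simpa only [P.x_n] using P.monotone hi

def points : Finset ℝ := (range (P.n + 1)).image P.x

lemma mem_points {y : ℝ} : y ∈ P.points ↔ ∃ i ≤ P.n, P.x i = y := by
  simp [points]

lemma x_mem_points {i : ℕ} (hi : i ≤ P.n) : P.x i ∈ P.points := P.mem_points.2 ⟨i, hi, rfl⟩

lemma mem_Icc_of_mem_points {y : ℝ} (hy : y ∈ P.points) : y ∈ Set.Icc s t := by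
  obtain ⟨i, hi, rfl⟩ := P.mem_points.1 hy
  exact ⟨P.left_le_x i, P.x_le_right hi⟩

lemma left_mem_points : s ∈ P.points := P.mem_points.2 ⟨0, Nat.zero_le _, P.x_zero⟩

lemma right_mem_points : t ∈ P.points := P.mem_points.2 ⟨P.n, le_rfl, P.x_n⟩

def mesh : ℝ := ⨆ i : Fin P.n, P.x (i + 1) - P.x i

lemma sub_le_mesh {i : ℕ} (hi : i < P.n) : P.x (i + 1) - P.x i ≤ P.mesh :=
  le_ciSup (f := fun i : Fin P.n => P.x (i + 1) - P.x i) (Finite.bddAbove_range _) ⟨i, hi⟩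

lemma mesh_nonneg : 0 ≤ P.mesh :=
  Real.iSup_nonneg fun _ => sub_nonneg.2 (P.monotone (Nat.le_succ _))

lemma mesh_le {δ : ℝ} (hδ : 0 ≤ δ) (h : ∀ i < P.n, P.x (i + 1) - P.x i ≤ δ) : P.mesh ≤ δ :=
  Real.iSup_le (fun i => h i i.2) hδ

lemma sum_sub_eq : ∑ i ∈ range P.n, (P.x (i + 1) - P.x i) = t - s := by
  rw [sum_range_sub, P.x_n, P.x_zero]

lemma sum_rpow_sub_le {μ : ℝ} (hμ : 1 ≤ μ) :
    ∑ i ∈ range P.n, (P.x (i + 1) - P.x i) ^ μ ≤ (t - s) * P.mesh ^ (μ - 1) := by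
  rw [← P.sum_sub_eq, sum_mul]
  refine sum_le_sum fun i hi => ?_
  have hgap : 0 ≤ P.x (i + 1) - P.x i := sub_nonneg.2 (P.monotone (Nat.le_succ _))
  calc (P.x (i + 1) - P.x i) ^ μ = (P.x (i + 1) - P.x i) * (P.x (i + 1) - P.x i) ^ (μ - 1) := by
        rw [← Real.rpow_one_add' hgap (by linarith), add_sub_cancel]
    _ ≤ (P.x (i + 1) - P.x i) * P.mesh ^ (μ - 1) := by
        gcongr
        exact P.sub_le_mesh (Finset.mem_range.1 hi)

lemma exists_sub_le_two_mul_div {m : ℕ} (hn : P.n = m + 2) :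
    ∃ k ≤ m, P.x (k + 2) - P.x k ≤ 2 * (t - s) / (m + 1) := by
  have hsplit : ∀ k,
      P.x (k + 2) - P.x k = (P.x (k + 1 + 1) - P.x (k + 1)) + (P.x (k + 1) - P.x k) :=
    fun k => by ring
  have hsum : ∑ k ∈ range (m + 1), (P.x (k + 2) - P.x k)
      ≤ ∑ _k ∈ range (m + 1), 2 * (t - s) / (m + 1) := by
    rw [funext hsplit, sum_add_distrib, sum_range_sub (fun k => P.x (k + 1)), sum_range_sub P.x,
      sum_const, card_range, nsmul_eq_mul, ← hn, P.x_n, P.x_zero]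
    push_cast
    rw [mul_div_cancel₀ _ (by positivity)]
    linarith [P.left_le_x 1, P.x_le_right (i := m + 1) (by omega)]
  obtain ⟨k, hk, hle⟩ := exists_le_of_sum_le nonempty_range_add_one hsum
  exact ⟨k, Nat.lt_succ_iff.1 (Finset.mem_range.1 hk), hle⟩

end Points

def take (P : IntervalPartition s t) (i : ℕ) {t' : ℝ} (h : P.x i = t') :
    IntervalPartition s t' where
  n := i
  x j := P.x (min j i)
  monotone _ _ hjk := P.monotone (min_le_min_right i hjk)
  x_zero := by simp [P.x_zero]
  x_n := by simp [h]

def drop (P : IntervalPartition s t) (i : ℕ) {s' : ℝ} (h : P.x i = s') (hi : i ≤ P.n) :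
    IntervalPartition s' t where
  n := P.n - i
  x j := P.x (i + j)
  monotone _ _ hjk := P.monotone (Nat.add_le_add_left hjk i)
  x_zero := by simp [h]
  x_n := by rw [Nat.add_sub_cancel' hi, P.x_n]

lemma points_take_subset (P : IntervalPartition s t) {i : ℕ} {y : ℝ} (h : P.x i = y)
    (hi : i ≤ P.n) : (P.take i h).points ⊆ P.points := fun z hz => by
  obtain ⟨j, hj, rfl⟩ := (P.take i h).mem_points.1 hz
  exact P.x_mem_points ((min_le_right j i).trans hi)

lemma mem_points_take (P : IntervalPartition s t) {i : ℕ} {y z : ℝ} (h : P.x i = y)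
    (hz : z ∈ P.points) (hzy : z ≤ y) : z ∈ (P.take i h).points := by
  obtain ⟨j, -, rfl⟩ := P.mem_points.1 hz
  rcases le_total j i with hji | hij
  · exact (P.take i h).mem_points.2 ⟨j, hji, by simp [take, hji]⟩
  · refine (P.take i h).mem_points.2 ⟨i, le_rfl, ?_⟩
    simp only [take, min_self]
    exact le_antisymm (P.monotone hij) (h ▸ hzy)

def append (P : IntervalPartition s t) (Q : IntervalPartition t u) : IntervalPartition s u where
  n := P.n + Q.n
  x j := if j ≤ P.n then P.x j else Q.x (j - P.n)
  monotone := monotone_nat_of_le_succ fun j => by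
    split_ifs with h₁ h₂ h₂
    · exact P.monotone j.le_succ
    · exact (P.x_le_right h₁).trans (Q.left_le_x _)
    · omega
    · exact Q.monotone (by omega)
  x_zero := by simp [P.x_zero]
  x_n := by
    split_ifs with h
    · have hQ : Q.n = 0 := by omega
      have htu := Q.x_n
      rw [hQ, Q.x_zero] at htu
      simp [hQ, P.x_n, htu]
    · simp [Q.x_n]

lemma append_x_add (P : IntervalPartition s t) (Q : IntervalPartition t u) (j : ℕ) :
    (P.append Q).x (P.n + j) = Q.x j := by
  rcases j with _ | j
  · simp [append, P.x_n, Q.x_zero]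
  · simp [append]

lemma append_x_of_le (P : IntervalPartition s t) (Q : IntervalPartition t u) {j : ℕ}
    (hj : j ≤ P.n) : (P.append Q).x j = P.x j := if_pos hj

def uniform (h : s ≤ t) (m : ℕ) : IntervalPartition s t where
  n := m + 1
  x j := min (s + j * ((t - s) / (m + 1))) t
  monotone _ _ hjk := by
    have : 0 ≤ (t - s) / (m + 1) := div_nonneg (sub_nonneg.2 h) (by positivity)
    exact min_le_min_right t (by gcongr)
  x_zero := by simp [h]
  x_n := by
    push_cast
    rw [mul_div_cancel₀ _ (by positivity), add_sub_cancel, min_self]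

def ofStep (π : ℕ → ℝ) (N : ℕ) (h0 : π 0 = s) (hN : π N = t)
    (hπ : ∀ i < N, π i ≤ π (i + 1)) : IntervalPartition s t where
  n := N
  x i := π (min i N)
  monotone := monotone_nat_of_le_succ fun i => by
    rcases lt_or_ge i N with hi | hi
    · rw [min_eq_left hi.le, min_eq_left hi]
      exact hπ i hi
    · rw [min_eq_right hi, min_eq_right (by omega)]
  x_zero := by simp [h0]
  x_n := by simp [hN]

lemma ofStep_x_of_le {π : ℕ → ℝ} {N : ℕ} (h0 : π 0 = s) (hN : π N = t)
    (hπ : ∀ i < N, π i ≤ π (i + 1)) {i : ℕ} (hi : i ≤ N) : (ofStep π N h0 hN hπ).x i = π i := by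
  simp [ofStep, min_eq_left hi]

def ofFinset (E : Finset ℝ) (hs : s ∈ E) (ht : t ∈ E) (hE : ∀ y ∈ E, y ∈ Set.Icc s t) :
    IntervalPartition s t where
  n := E.card - 1
  x k := if hk : k < E.card then E.orderEmbOfFin rfl ⟨k, hk⟩ else t
  monotone j k hjk := by
    dsimp only
    split_ifs with hj hk hk
    · exact (E.orderEmbOfFin rfl).monotone (Fin.mk_le_mk.2 hjk)
    · exact (hE _ (E.orderEmbOfFin_mem rfl _)).2
    · omega
    · exact le_rfl
  x_zero := by
    have hpos : 0 < E.card := card_pos.2 ⟨s, hs⟩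
    rw [dif_pos hpos, orderEmbOfFin_zero rfl hpos]
    exact le_antisymm (min'_le E s hs) (le_min' E _ s fun y hy => (hE y hy).1)
  x_n := by
    have hpos : 0 < E.card := card_pos.2 ⟨s, hs⟩
    rw [dif_pos (by omega), orderEmbOfFin_last rfl hpos]
    exact le_antisymm (max'_le E _ t fun y hy => (hE y hy).2) (le_max' E t ht)

lemma subset_points_ofFinset (E : Finset ℝ) (hs : s ∈ E) (ht : t ∈ E)
    (hE : ∀ y ∈ E, y ∈ Set.Icc s t) : E ⊆ (ofFinset E hs ht hE).points := by
  intro y hy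
  obtain ⟨⟨k, hk⟩, rfl⟩ : y ∈ Set.range (E.orderEmbOfFin rfl) := by
    rw [range_orderEmbOfFin]; exact hy
  exact (ofFinset E hs ht hE).mem_points.2
    ⟨k, by simp only [ofFinset]; omega, by simp [ofFinset, hk]⟩

def eraseSucc (P : IntervalPartition s t) (k : ℕ) (hk : k + 2 ≤ P.n) : IntervalPartition s t where
  n := P.n - 1
  x j := if j ≤ k then P.x j else P.x (j + 1)
  monotone := monotone_nat_of_le_succ fun j => by
    split_ifs <;> exact P.monotone (by omega)
  x_zero := by simp [P.x_zero]
  x_n := by rw [if_neg (by omega), Nat.sub_add_cancel (by omega), P.x_n]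

lemma mesh_append_le (P : IntervalPartition s t) (Q : IntervalPartition t u) :
    (P.append Q).mesh ≤ max P.mesh Q.mesh := by
  refine mesh_le _ (le_max_of_le_left P.mesh_nonneg) fun j hj => ?_
  rcases le_or_gt (j + 1) P.n with hjP | hjP
  · rw [append_x_of_le _ _ hjP, append_x_of_le _ _ (by omega)]
    exact le_max_of_le_left (P.sub_le_mesh hjP)
  · obtain ⟨k, rfl⟩ : ∃ k, j = P.n + k := ⟨j - P.n, by omega⟩
    rw [add_assoc, append_x_add, append_x_add]
    exact le_max_of_le_right (Q.sub_le_mesh (by simp only [append] at hj; omega))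

lemma mesh_uniform_le (h : s ≤ t) (m : ℕ) : (uniform h m).mesh ≤ (t - s) / (m + 1) := by
  set c := (t - s) / (m + 1)
  have hc : 0 ≤ c := div_nonneg (sub_nonneg.2 h) (by positivity)
  refine mesh_le _ hc fun j _ => ?_
  have key : min (s + j * c + c) t ≤ min (s + j * c) t + c :=
    (min_le_min_left _ (le_add_of_nonneg_right hc)).trans_eq (min_add_add_right _ _ c)
  simp only [uniform, Nat.cast_add, Nat.cast_one, add_mul, one_mul, ← add_assoc]
  linarith

lemma exists_mesh_le (h : s ≤ t) {δ : ℝ} (hδ : 0 < δ) :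
    ∃ P : IntervalPartition s t, P.mesh ≤ δ := by
  obtain ⟨m, hm⟩ := exists_nat_gt ((t - s) / δ)
  refine ⟨uniform h m, (mesh_uniform_le h m).trans ?_⟩
  rw [div_le_iff₀ (by positivity)]
  rw [div_lt_iff₀ hδ] at hm
  linarith

lemma mesh_ofStep_le {π : ℕ → ℝ} {N : ℕ} (h0 : π 0 = s) (hN : π N = t)
    (hπ : ∀ i < N, π i ≤ π (i + 1)) {δ : ℝ} (hδ : 0 ≤ δ) (hmesh : ∀ i < N, π (i + 1) - π i ≤ δ) :
    (ofStep π N h0 hN hπ).mesh ≤ δ :=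
  mesh_le _ hδ fun i hi => by
    rw [ofStep_x_of_le h0 hN hπ hi, ofStep_x_of_le h0 hN hπ hi.le]
    exact hmesh i hi

section Sum

variable {M : Type*} [AddCommMonoid M] (g : ℝ → ℝ → M)

def sum (P : IntervalPartition s t) : M := ∑ i ∈ range P.n, g (P.x i) (P.x (i + 1))

lemma sum_of_n_eq_zero (P : IntervalPartition s t) (h : P.n = 0) : P.sum g = 0 := by
  simp [sum, h]

lemma sum_of_n_eq_one (P : IntervalPartition s t) (h : P.n = 1) : P.sum g = g s t := by
  simpa [sum, h, P.x_zero] using congrArg (g s) (h ▸ P.x_n)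

lemma sum_congr {g' : ℝ → ℝ → M} (P : IntervalPartition s t)
    (h : ∀ a ∈ Set.Icc s t, ∀ b ∈ Set.Icc s t, g a b = g' a b) : P.sum g = P.sum g' :=
  Finset.sum_congr rfl fun i hi => h _ ⟨P.left_le_x i, P.x_le_right (Finset.mem_range.1 hi).le⟩ _
    ⟨P.left_le_x _, P.x_le_right (Finset.mem_range.1 hi)⟩

lemma sum_take_add_sum_drop (P : IntervalPartition s t) {i : ℕ} {y : ℝ} (h : P.x i = y)
    (hi : i ≤ P.n) : (P.take i h).sum g + (P.drop i h hi).sum g = P.sum g := by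
  obtain ⟨r, hr⟩ : ∃ r, P.n = i + r := ⟨P.n - i, by omega⟩
  simp only [sum, take, drop, hr, Nat.add_sub_cancel_left, sum_range_add]
  congr 1
  refine Finset.sum_congr rfl fun j hj => ?_
  have hj := Finset.mem_range.1 hj
  rw [min_eq_left hj.le, min_eq_left (Nat.succ_le_of_lt hj)]

lemma sum_append (P : IntervalPartition s t) (Q : IntervalPartition t u) :
    (P.append Q).sum g = P.sum g + Q.sum g := by
  simp only [sum, show (P.append Q).n = P.n + Q.n from rfl, sum_range_add, add_assoc,
    append_x_add]
  congr 1
  refine Finset.sum_congr rfl fun j hj => ?_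
  rw [append_x_of_le _ _ (Finset.mem_range.1 hj).le, append_x_of_le _ _ (Finset.mem_range.1 hj)]

lemma sum_ofStep {π : ℕ → ℝ} {N : ℕ} (h0 : π 0 = s) (hN : π N = t)
    (hπ : ∀ i < N, π i ≤ π (i + 1)) :
    (ofStep π N h0 hN hπ).sum g = ∑ i ∈ range N, g (π i) (π (i + 1)) :=
  Finset.sum_congr rfl fun i hi => by
    have hi := Finset.mem_range.1 hi
    rw [ofStep_x_of_le h0 hN hπ hi.le, ofStep_x_of_le h0 hN hπ hi]

lemma sum_eraseSucc {G : Type*} [AddCommGroup G] (g : ℝ → ℝ → G) (P : IntervalPartition s t)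
    {k : ℕ} (hk : k + 2 ≤ P.n) :
    (P.eraseSucc k hk).sum g = P.sum g +
      (g (P.x k) (P.x (k + 2)) - g (P.x k) (P.x (k + 1)) - g (P.x (k + 1)) (P.x (k + 2))) := by
  obtain ⟨r, hr⟩ : ∃ r, P.n = k + 2 + r := ⟨P.n - (k + 2), by omega⟩
  simp only [sum, eraseSucc, hr, show k + 2 + r - 1 = k + 1 + r by omega, sum_range_add,
    sum_range_succ]
  have h₁ : ∑ i ∈ range k, g (if i ≤ k then P.x i else P.x (i + 1))
      (if i + 1 ≤ k then P.x (i + 1) else P.x (i + 1 + 1))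
      = ∑ i ∈ range k, g (P.x i) (P.x (i + 1)) :=
    Finset.sum_congr rfl fun i hi => by
      rw [if_pos (by simp at hi; omega), if_pos (by simp at hi; omega)]
  have h₂ : ∑ i ∈ range r, g (if k + 1 + i ≤ k then P.x (k + 1 + i) else P.x (k + 1 + i + 1))
      (if k + 1 + i + 1 ≤ k then P.x (k + 1 + i + 1) else P.x (k + 1 + i + 1 + 1)) =
      ∑ i ∈ range r, g (P.x (k + 2 + i)) (P.x (k + 2 + i + 1)) :=
    Finset.sum_congr rfl fun i _ => by
      rw [if_neg (by omega), if_neg (by omega), show k + 1 + i + 1 = k + 2 + i by omega]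
  rw [h₁, h₂, if_pos le_rfl, if_neg (by omega)]
  abel

end Sum

end IntervalPartition

/-- Deleting, from a partition of `[s, t]` into `m + 2` intervals, a point whose neighbours are
at distance `≤ 2 (t - s) / (m + 1)` changes the Riemann sum by at most `A (2 (t - s) / (m + 1))^μ`;
deleting points one at a time down to a single interval accumulates at most this constant
times `A (t - s)^μ`. -/
def sewingConst (μ : ℝ) : ℝ := ∑' k : ℕ, (2 / ((k : ℝ) + 1)) ^ μ

section SewingConst

variable {μ : ℝ}

lemma summable_two_div_rpow (hμ : 1 < μ) : Summable fun k : ℕ => (2 / ((k : ℝ) + 1)) ^ μ := by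
  refine (((Real.summable_one_div_nat_add_rpow 1 μ).2 hμ).mul_left (2 ^ μ)).congr fun k => ?_
  rw [abs_of_pos (by positivity), div_eq_mul_one_div 2, Real.mul_rpow zero_le_two (by positivity),
    Real.div_rpow zero_le_one (by positivity), Real.one_rpow]

lemma sum_range_le_sewingConst (hμ : 1 < μ) (m : ℕ) :
    ∑ k ∈ range m, (2 / ((k : ℝ) + 1)) ^ μ ≤ sewingConst μ :=
  (summable_two_div_rpow hμ).sum_le_tsum _ fun _ _ => by positivity

lemma sewingConst_pos (hμ : 1 < μ) : 0 < sewingConst μ :=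
  (summable_two_div_rpow hμ).tsum_pos (fun _ => by positivity) 0 (by positivity)

end SewingConst

/-- The pointwise form of `‖δg‖_μ ≤ A`, asked on all of `ℝ`: the theorem reduces to it by
clamping the time variables to `[l1, l2]`. -/
structure HasDeltaBound (μ A : ℝ) (g : ℝ → ℝ → V) : Prop where
  diag : ∀ x, g x x = 0
  norm_deltaInc_le : ∀ s u t, s ≤ u → u ≤ t → ‖deltaInc g s u t‖ ≤ A * (t - s) ^ μ

namespace HasDeltaBound

variable {μ A s t : ℝ} {g : ℝ → ℝ → V}

lemma nonneg (hg : HasDeltaBound μ A g) : 0 ≤ A := by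
  simpa using (norm_nonneg _).trans (hg.norm_deltaInc_le 0 0 1 le_rfl zero_le_one)

theorem norm_sum_sub_le_of_n_eq_succ (hg : HasDeltaBound μ A g) (hμ : 0 ≤ μ) (m : ℕ)
    (P : IntervalPartition s t) (hn : P.n = m + 1) :
    ‖P.sum g - g s t‖ ≤ A * (∑ k ∈ range m, (2 / ((k : ℝ) + 1)) ^ μ) * (t - s) ^ μ := by
  induction m generalizing P with
  | zero => simp [P.sum_of_n_eq_one g hn]
  | succ m ih =>
    obtain ⟨k, hkm, hk⟩ := P.exists_sub_le_two_mul_div hn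
    have hk2 : k + 2 ≤ P.n := by omega
    set d := deltaInc g (P.x k) (P.x (k + 1)) (P.x (k + 2))
    have hd : ‖d‖ ≤ A * ((2 / ((m : ℝ) + 1)) ^ μ * (t - s) ^ μ) := by
      refine (hg.norm_deltaInc_le _ _ _ (P.monotone (by omega)) (P.monotone (by omega))).trans ?_
      rw [← Real.mul_rpow (by positivity) (sub_nonneg.2 P.le), ← mul_div_right_comm]
      have hA := hg.nonneg
      have hk0 := sub_nonneg.2 (P.monotone (show k ≤ k + 2 by omega))
      gcongr
    have hsum : P.sum g = (P.eraseSucc k hk2).sum g - d := by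
      rw [P.sum_eraseSucc g hk2]
      simp only [d, deltaInc]
      abel
    calc ‖P.sum g - g s t‖ ≤ ‖(P.eraseSucc k hk2).sum g - g s t‖ + ‖d‖ := by
          rw [hsum, sub_right_comm]
          exact norm_sub_le _ _
      _ ≤ A * (∑ k ∈ range m, (2 / ((k : ℝ) + 1)) ^ μ) * (t - s) ^ μ
          + A * ((2 / ((m : ℝ) + 1)) ^ μ * (t - s) ^ μ) :=
          add_le_add (ih _ (by simp only [IntervalPartition.eraseSucc]; omega)) hd
      _ = A * (∑ k ∈ range (m + 1), (2 / ((k : ℝ) + 1)) ^ μ) * (t - s) ^ μ := by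
          rw [sum_range_succ]
          ring

theorem norm_sum_sub_le (hg : HasDeltaBound μ A g) (hμ : 1 < μ) (P : IntervalPartition s t) :
    ‖P.sum g - g s t‖ ≤ sewingConst μ * A * (t - s) ^ μ := by
  rcases hn : P.n with _ | m
  · obtain rfl := P.eq_of_n_eq_zero hn
    simp [P.sum_of_n_eq_zero g hn, hg.diag, Real.zero_rpow (by linarith : μ ≠ 0)]
  · refine (hg.norm_sum_sub_le_of_n_eq_succ (by linarith) m P hn).trans ?_
    have hA := hg.nonneg
    have hst := sub_nonneg.2 P.le
    rw [mul_comm (sewingConst μ)]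
    gcongr
    exact sum_range_le_sewingConst hμ m

theorem norm_sum_sub_sum_le_of_points_subset (hg : HasDeltaBound μ A g) (hμ : 1 < μ)
    (P Q : IntervalPartition s t) (hPQ : P.points ⊆ Q.points) :
    ‖Q.sum g - P.sum g‖ ≤ sewingConst μ * A * ∑ j ∈ range P.n, (P.x (j + 1) - P.x j) ^ μ := by
  obtain ⟨m, hm⟩ : ∃ m, P.n = m := ⟨_, rfl⟩
  induction m generalizing t with
  | zero =>
    obtain rfl := P.eq_of_n_eq_zero hm
    simpa [P.sum_of_n_eq_zero g hm, hm, hg.diag, Real.zero_rpow (by linarith : μ ≠ 0)] using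
      hg.norm_sum_sub_le hμ Q
  | succ m ih =>
    -- split `P` and `Q` at the last interior point of `P`, which is also a point of `Q`
    obtain ⟨i, hi, hQi⟩ := Q.mem_points.1 (hPQ (P.x_mem_points (i := m) (by omega)))
    set P' := P.take m rfl
    set Q' := Q.take i hQi
    have hP : P.sum g = P'.sum g + g (P.x m) t := by
      rw [← P.sum_take_add_sum_drop g (i := m) rfl (by omega),
        (P.drop m rfl (by omega)).sum_of_n_eq_one g (by simp only [IntervalPartition.drop]; omega)]
    have hQ : Q.sum g = Q'.sum g + (Q.drop i hQi hi).sum g :=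
      (Q.sum_take_add_sum_drop g hQi hi).symm
    have hP'Q' : P'.points ⊆ Q'.points := fun z hz =>
      Q.mem_points_take hQi (hPQ (P.points_take_subset (i := m) rfl (by omega) hz))
        (P'.mem_Icc_of_mem_points hz).2
    have hgaps : ∑ j ∈ range P'.n, (P'.x (j + 1) - P'.x j) ^ μ
        = ∑ j ∈ range m, (P.x (j + 1) - P.x j) ^ μ :=
      Finset.sum_congr rfl fun j hj => by
        have hj := Finset.mem_range.1 hj
        simp only [P', IntervalPartition.take, min_eq_left hj.le,
          min_eq_left (Nat.succ_le_of_lt hj)]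
    rw [hm]
    calc ‖Q.sum g - P.sum g‖
        ≤ ‖Q'.sum g - P'.sum g‖ + ‖(Q.drop i hQi hi).sum g - g (P.x m) t‖ := by
          rw [hP, hQ, add_sub_add_comm]
          exact norm_add_le _ _
      _ ≤ sewingConst μ * A * ∑ j ∈ range m, (P.x (j + 1) - P.x j) ^ μ
          + sewingConst μ * A * (t - P.x m) ^ μ := by
          gcongr
          · rw [← hgaps]
            exact ih P' Q' hP'Q' rfl
          · exact hg.norm_sum_sub_le hμ _
      _ = sewingConst μ * A * ∑ j ∈ range (m + 1), (P.x (j + 1) - P.x j) ^ μ := by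
          rw [sum_range_succ, ← hm, P.x_n]
          ring

theorem norm_sum_sub_sum_le (hg : HasDeltaBound μ A g) (hμ : 1 < μ)
    (P Q : IntervalPartition s t) :
    ‖P.sum g - Q.sum g‖ ≤ sewingConst μ * A * (t - s) * P.mesh ^ (μ - 1)
      + sewingConst μ * A * (t - s) * Q.mesh ^ (μ - 1) := by
  have hs : s ∈ P.points ∪ Q.points := mem_union_left _ P.left_mem_points
  have ht : t ∈ P.points ∪ Q.points := mem_union_left _ P.right_mem_points
  have hE : ∀ y ∈ P.points ∪ Q.points, y ∈ Set.Icc s t := fun y hy =>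
    (mem_union.1 hy).elim P.mem_Icc_of_mem_points Q.mem_Icc_of_mem_points
  set R := IntervalPartition.ofFinset _ hs ht hE
  have hR : P.points ∪ Q.points ⊆ R.points := IntervalPartition.subset_points_ofFinset _ hs ht hE
  have hKA : 0 ≤ sewingConst μ * A := mul_nonneg (sewingConst_pos hμ).le hg.nonneg
  have bound : ∀ P' : IntervalPartition s t, P'.points ⊆ R.points →
      ‖R.sum g - P'.sum g‖ ≤ sewingConst μ * A * (t - s) * P'.mesh ^ (μ - 1) := fun P' hP' =>
    (hg.norm_sum_sub_sum_le_of_points_subset hμ P' R hP').trans <| by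
      rw [mul_assoc _ (t - s)]
      exact mul_le_mul_of_nonneg_left (P'.sum_rpow_sub_le hμ.le) hKA
  calc ‖P.sum g - Q.sum g‖ ≤ ‖R.sum g - P.sum g‖ + ‖R.sum g - Q.sum g‖ := by
        rw [norm_sub_rev (R.sum g) (P.sum g)]
        exact norm_sub_le_norm_sub_add_norm_sub _ _ _
    _ ≤ _ := add_le_add (bound P (subset_union_left.trans hR))
        (bound Q (subset_union_right.trans hR))

end HasDeltaBound

def IsRiemannLimit (g : ℝ → ℝ → V) (C p : ℝ) (Λ : ℝ → ℝ → V) : Prop :=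
  ∀ s t (P : IntervalPartition s t), ‖Λ s t - P.sum g‖ ≤ C * (t - s) * P.mesh ^ p

namespace IsRiemannLimit

variable {g Λ : ℝ → ℝ → V} {C p s t u : ℝ}

lemma norm_sub_sum_le_of_mesh_le (h : IsRiemannLimit g C p Λ) (hC : 0 ≤ C) (hp : 0 ≤ p)
    (P : IntervalPartition s t) {δ : ℝ} (hδ : P.mesh ≤ δ) :
    ‖Λ s t - P.sum g‖ ≤ C * (t - s) * δ ^ p := by
  have := sub_nonneg.2 P.le
  have := P.mesh_nonneg
  exact (h s t P).trans (by gcongr)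

lemma add (h : IsRiemannLimit g C p Λ) (hC : 0 ≤ C) (hp : 0 < p) (hsu : s ≤ u) (hut : u ≤ t) :
    Λ s u + Λ u t = Λ s t := by
  refine eq_of_norm_sub_le_zero (le_of_forall_pos_le_add fun ε hε => ?_)
  obtain ⟨δ, hδ, hδε⟩ := exists_pos_mul_rpow_le (2 * C * (t - s)) hp hε
  obtain ⟨P, hP⟩ := IntervalPartition.exists_mesh_le hsu hδ
  obtain ⟨Q, hQ⟩ := IntervalPartition.exists_mesh_le hut hδ
  have h₁ := h.norm_sub_sum_le_of_mesh_le hC hp.le P hP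
  have h₂ := h.norm_sub_sum_le_of_mesh_le hC hp.le Q hQ
  have h₃ := h.norm_sub_sum_le_of_mesh_le hC hp.le (P.append Q)
    ((P.mesh_append_le Q).trans (max_le hP hQ))
  rw [IntervalPartition.sum_append] at h₃
  calc ‖Λ s u + Λ u t - Λ s t‖
      = ‖(Λ s u - P.sum g) + (Λ u t - Q.sum g) - (Λ s t - (P.sum g + Q.sum g))‖ := by
        congr 1; abel
    _ ≤ ‖Λ s u - P.sum g‖ + ‖Λ u t - Q.sum g‖ + ‖Λ s t - (P.sum g + Q.sum g)‖ :=
        (norm_sub_le _ _).trans (add_le_add (norm_add_le _ _) le_rfl)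
    _ ≤ C * (u - s) * δ ^ p + C * (t - u) * δ ^ p + C * (t - s) * δ ^ p := by gcongr
    _ = 2 * C * (t - s) * δ ^ p := by ring
    _ ≤ 0 + ε := by rwa [zero_add]

lemma norm_sub_le (h : IsRiemannLimit g C p Λ) (hC : 0 ≤ C) (hp : 0 < p) (hst : s ≤ t) {B : ℝ}
    (hB : ∀ P : IntervalPartition s t, ‖P.sum g - g s t‖ ≤ B) : ‖Λ s t - g s t‖ ≤ B := by
  refine le_of_forall_pos_le_add fun ε hε => ?_
  obtain ⟨δ, hδ, hδε⟩ := exists_pos_mul_rpow_le (C * (t - s)) hp hε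
  obtain ⟨P, hP⟩ := IntervalPartition.exists_mesh_le hst hδ
  calc ‖Λ s t - g s t‖ ≤ ‖Λ s t - P.sum g‖ + ‖P.sum g - g s t‖ :=
        norm_sub_le_norm_sub_add_norm_sub _ _ _
    _ ≤ C * (t - s) * δ ^ p + B := add_le_add (h.norm_sub_sum_le_of_mesh_le hC hp.le P hP) (hB P)
    _ ≤ B + ε := by linarith

end IsRiemannLimit

theorem HasDeltaBound.exists_isRiemannLimit [CompleteSpace V] {μ A : ℝ} {g : ℝ → ℝ → V}
    (hg : HasDeltaBound μ A g) (hμ : 1 < μ) :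
    ∃ Λ, IsRiemannLimit g (sewingConst μ * A) (μ - 1) Λ := by
  have hKA : 0 ≤ sewingConst μ * A := mul_nonneg (sewingConst_pos hμ).le hg.nonneg
  have h : ∀ s t, ∃ L : V, ∀ P : IntervalPartition s t,
      ‖L - P.sum g‖ ≤ sewingConst μ * A * (t - s) * P.mesh ^ (μ - 1) := by
    intro s t
    rcases le_or_gt s t with hst | hts
    · refine exists_norm_sub_le_of_norm_sub_le_add _ _ (fun ε hε => ?_) (hg.norm_sum_sub_sum_le hμ)
      obtain ⟨δ, hδ, hδε⟩ :=
        exists_pos_mul_rpow_le (sewingConst μ * A * (t - s)) (sub_pos.2 hμ) hε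
      obtain ⟨P, hP⟩ := IntervalPartition.exists_mesh_le hst hδ
      have := sub_nonneg.2 hst
      have := P.mesh_nonneg
      exact ⟨P, le_trans (by gcongr) hδε⟩
    · exact ⟨0, fun P => absurd P.le (not_le.2 hts)⟩
  choose Λ hΛ using h
  exact ⟨Λ, hΛ⟩

theorem hasDeltaBound_comp_projIcc {a b μ A : ℝ} {g : ℝ → ℝ → V} (hab : a ≤ b) (hμ : 0 ≤ μ)
    (hA : 0 ≤ A) (hg : ∀ x ∈ Set.Icc a b, g x x = 0)
    (hδ : ∀ s u t, a ≤ s → s ≤ u → u ≤ t → t ≤ b → ‖deltaInc g s u t‖ ≤ A * (t - s) ^ μ) :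
    HasDeltaBound μ A fun s t => g (projIcc a b hab s) (projIcc a b hab t) where
  diag x := hg _ (projIcc a b hab x).2
  norm_deltaInc_le s u t hsu hut := by
    have hsu' : (projIcc a b hab s : ℝ) ≤ projIcc a b hab u := monotone_projIcc hab hsu
    have hut' : (projIcc a b hab u : ℝ) ≤ projIcc a b hab t := monotone_projIcc hab hut
    refine (hδ _ _ _ (projIcc a b hab s).2.1 hsu' hut' (projIcc a b hab t).2.2).trans ?_
    have hts : (projIcc a b hab t : ℝ) - projIcc a b hab s ≤ t - s :=
      (le_abs_self _).trans ((abs_projIcc_sub_projIcc hab).trans_eq (abs_of_nonneg (by linarith)))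
    have := sub_nonneg.2 (hsu'.trans hut')
    gcongr

/-- **Integration of small increments.** For `μ > 1` there is a constant `c_μ`, depending only
on `μ`, such that: for every Banach space `V`, every interval `[l1, l2]` and every continuous
1-increment `g` on the simplex vanishing on the diagonal with `‖δg‖_μ < ∞`, there is a function
`f : [l1, l2] → V` with `‖f_t - f_s - g_{st}‖ ≤ c_μ ‖δg‖_μ (t-s)^μ`, and `f_t - f_s` is the
limit of the Riemann sums `∑ g_{tᵢ t_{i+1}}` along partitions of `[s,t]` with mesh tending
to zero. -/
theorem integration_of_small_increments (μ : ℝ) (hμ : 1 < μ) :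
    ∃ c : ℝ, 0 < c ∧
      ∀ (V : Type) (_i1 : NormedAddCommGroup V) (_i2 : NormedSpace ℝ V)
        (_i3 : CompleteSpace V),
      ∀ (l1 l2 : ℝ), l1 < l2 →
      ∀ g : ℝ → ℝ → V,
        ContinuousOn (fun p : ℝ × ℝ => g p.1 p.2)
          {p : ℝ × ℝ | l1 ≤ p.1 ∧ p.1 ≤ p.2 ∧ p.2 ≤ l2} →
        (∀ t : ℝ, l1 ≤ t → t ≤ l2 → g t t = 0) →
        muNorm l1 l2 μ (deltaInc g) < ⊤ →
        ∃ f : ℝ → V,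
          (∀ s t : ℝ, l1 ≤ s → s ≤ t → t ≤ l2 →
            ‖f t - f s - g s t‖ ≤ c * (muNorm l1 l2 μ (deltaInc g)).toReal * (t - s) ^ μ) ∧
          (∀ s t : ℝ, l1 ≤ s → s ≤ t → t ≤ l2 →
            ∀ ε : ℝ, 0 < ε → ∃ δ : ℝ, 0 < δ ∧
              ∀ (N : ℕ) (π : ℕ → ℝ), π 0 = s → π N = t →
                (∀ i < N, π i < π (i + 1)) → (∀ i < N, π (i + 1) - π i ≤ δ) →
                ‖f t - f s - ∑ i ∈ Finset.range N, g (π i) (π (i + 1))‖ ≤ ε) := by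
  refine ⟨sewingConst μ, sewingConst_pos hμ, fun V _ _ _ l1 l2 hl g _ hdiag hfin => ?_⟩
  set A := (muNorm l1 l2 μ (deltaInc g)).toReal
  set G : ℝ → ℝ → V := fun s t => g (projIcc l1 l2 hl.le s) (projIcc l1 l2 hl.le t)
  have hGg : ∀ x ∈ Set.Icc l1 l2, ∀ y ∈ Set.Icc l1 l2, G x y = g x y := fun x hx y hy => by
    simp only [G, projIcc_of_mem hl.le hx, projIcc_of_mem hl.le hy]
  have hG : HasDeltaBound μ A G := hasDeltaBound_comp_projIcc hl.le (by linarith)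
    ENNReal.toReal_nonneg (fun x hx => hdiag x hx.1 hx.2)
    fun s u t hs hsu hut ht => norm_le_muNorm_toReal_mul_rpow hfin.ne hs hsu hut ht
  obtain ⟨Λ, hΛ⟩ := hG.exists_isRiemannLimit hμ
  have hKA : 0 ≤ sewingConst μ * A := mul_nonneg (sewingConst_pos hμ).le ENNReal.toReal_nonneg
  have hp : 0 < μ - 1 := sub_pos.2 hμ
  have hf : ∀ s t, l1 ≤ s → s ≤ t → Λ l1 t - Λ l1 s = Λ s t := fun s t hs hst => by
    rw [← hΛ.add hKA hp hs hst, add_sub_cancel_left]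
  refine ⟨Λ l1, fun s t hs hst ht => ?_, fun s t hs hst ht ε hε => ?_⟩
  · rw [hf s t hs hst, ← hGg s ⟨hs, hst.trans ht⟩ t ⟨hs.trans hst, ht⟩]
    exact hΛ.norm_sub_le hKA hp hst (hG.norm_sum_sub_le hμ)
  · obtain ⟨δ, hδ, hδε⟩ := exists_pos_mul_rpow_le (sewingConst μ * A * (t - s)) hp hε
    refine ⟨δ, hδ, fun N π h0 hN hπ hmesh => ?_⟩
    set P := IntervalPartition.ofStep π N h0 hN fun i hi => (hπ i hi).le
    have hPg : P.sum G = ∑ i ∈ Finset.range N, g (π i) (π (i + 1)) := by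
      rw [P.sum_congr G fun x hx y hy =>
          hGg x ⟨hs.trans hx.1, hx.2.trans ht⟩ y ⟨hs.trans hy.1, hy.2.trans ht⟩,
        IntervalPartition.sum_ofStep]
    rw [hf s t hs hst, ← hPg]
    exact (hΛ.norm_sub_sum_le_of_mesh_le hKA hp.le P
      (IntervalPartition.mesh_ofStep_le h0 hN _ hδ.le hmesh)).trans hδε
end
end

section
/- Garsia–Rodemich–Rumsey inequality in Hölder form (Lemma 3.3/GRR-1): For every γ > 0, every p ≥ 1 and every l ∈ ℕ there exists a constant C_{γ,p,l} > 0 such that for every T > 0 and every continuous function f : [0,T] → ℝ^l one has sup_{0≤s<t≤T} |f(t) − f(s)|/(t−s)^γ ≤ C_{γ,p,l} ( ∫₀^T ∫₀^T |f(u) − f(v)|^{2p} / |u−v|^{2γp+2} du dv )^{1/(2p)}. -/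
/-!
Write `Ψ(u, v) = ‖f u - f v‖ ^ q / |u - v| ^ (γ q + 2)` and `B = ∫∫_{[s,t]²} Ψ`. By Markov's
inequality, on any interval `J ⊆ [s,t]` two nonnegative functions are simultaneously at most four
times their averages at some point of `J`. Starting from a point `x₀` with `∫ Ψ(x₀, ·) ≤ 4B/(t-s)`,
this selects, inside intervals of length `rₙ = (t-s)/2ⁿ` shrinking to a target point `e`, points
`uₙ` with `∫ Ψ(uₙ, ·) ≤ 4B/rₙ` and `Ψ(uₙ, uₙ₊₁) ≤ 32B/rₙ²`. As `|uₙ - uₙ₊₁| ≤ rₙ`, this gives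
`‖f uₙ - f uₙ₊₁‖ ≤ (32B)^{1/q} rₙ^γ`, a geometric series, so `‖f x₀ - f e‖ ≲ B^{1/q} (t-s)^γ`;
take `e = s` and `e = t`.
-/

open Set MeasureTheory Filter Topology
open scoped ENNReal

section Markov
variable {α : Type*} [MeasurableSpace α] {μ : Measure α} {A : Set α}

theorem measure_inter_setOf_four_mul_setLAverage_lt_le (hA : μ A ≠ ∞) {φ : α → ℝ≥0∞}
    (hφ : AEMeasurable φ (μ.restrict A)) :
    μ (A ∩ {x | 4 * ⨍⁻ x in A, φ x ∂μ < φ x}) ≤ μ A / 4 := by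
  simp only [setLAverage_eq, ← mul_div_assoc]
  set R := ∫⁻ x in A, φ x ∂μ
  rcases eq_or_ne (μ A) 0 with hA0 | hA0
  · exact (measure_mono inter_subset_left).trans (by simp [hA0])
  rcases eq_or_ne R 0 with hR0 | hR0
  · calc μ (A ∩ {x | 4 * R / μ A < φ x}) ≤ μ.restrict A {x | φ x ≠ 0} := by
          rw [inter_comm]
          refine (measure_mono (inter_subset_inter_left _ ?_)).trans (Measure.le_restrict_apply _ _)
          exact fun x (hx : _ < φ x) => (pos_of_gt hx).ne'
      _ = 0 := ae_iff.mp ((lintegral_eq_zero_iff' hφ).mp hR0)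
      _ ≤ μ A / 4 := bot_le
  rcases eq_or_ne R ∞ with hRt | hRt
  · simp [hRt, ENNReal.mul_top, ENNReal.top_div_of_ne_top hA]
  calc μ (A ∩ {x | 4 * R / μ A < φ x}) ≤ μ.restrict A {x | 4 * R / μ A ≤ φ x} := by
        rw [inter_comm]
        exact (measure_mono (inter_subset_inter_left _ fun x (hx : _ < φ x) => hx.le)).trans
          (Measure.le_restrict_apply _ _)
    _ ≤ R / (4 * R / μ A) :=
        meas_ge_le_lintegral_div hφ (by simp [hR0, hA])
          (by simp [ENNReal.div_eq_top, ENNReal.mul_eq_top, hA0, hRt])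
    _ = μ A / 4 := by
        rw [ENNReal.div_eq_inv_mul, ENNReal.inv_div (Or.inl hA) (Or.inl hA0), mul_comm 4 R,
          mul_comm, ← mul_div_assoc, ENNReal.mul_div_mul_left _ _ hR0 hRt]

theorem exists_mem_le_four_mul_setLAverage (hA0 : μ A ≠ 0) (hA : μ A ≠ ∞)
    {φ ψ : α → ℝ≥0∞} (hφ : AEMeasurable φ (μ.restrict A)) (hψ : AEMeasurable ψ (μ.restrict A)) :
    ∃ x ∈ A, φ x ≤ 4 * ⨍⁻ x in A, φ x ∂μ ∧ ψ x ≤ 4 * ⨍⁻ x in A, ψ x ∂μ := by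
  by_contra! hbad
  have hcover : A ⊆ (A ∩ {x | 4 * ⨍⁻ x in A, φ x ∂μ < φ x}) ∪
      (A ∩ {x | 4 * ⨍⁻ x in A, ψ x ∂μ < ψ x}) := by
    intro x hx
    by_cases hφx : φ x ≤ 4 * ⨍⁻ x in A, φ x ∂μ
    · exact Or.inr ⟨hx, hbad x hx hφx⟩
    · exact Or.inl ⟨hx, not_le.mp hφx⟩
  have hquarters : μ A / 4 + μ A / 4 < μ A := by
    rw [ENNReal.div_add_div_same, ← two_mul, show (4 : ℝ≥0∞) = 2 * 2 by norm_num,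
      ENNReal.mul_div_mul_left _ _ two_ne_zero ENNReal.ofNat_ne_top]
    exact ENNReal.half_lt_self hA0 hA
  refine hquarters.not_ge ((measure_mono hcover).trans ((measure_union_le _ _).trans ?_))
  exact add_le_add (measure_inter_setOf_four_mul_setLAverage_lt_le hA hφ)
    (measure_inter_setOf_four_mul_setLAverage_lt_le hA hψ)

end Markov

section Kernel
variable {E : Type*} [NormedAddCommGroup E] {g : ℝ → E} {q a : ℝ}

noncomputable def grrKernel (g : ℝ → E) (q a u v : ℝ) : ℝ≥0∞ :=
  ENNReal.ofReal (‖g u - g v‖ ^ q / |u - v| ^ a)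

theorem measurable_uncurry_grrKernel (hg : Continuous g) :
    Measurable (Function.uncurry (grrKernel g q a)) := by
  have hnorm : Measurable fun p : ℝ × ℝ => ‖g p.1 - g p.2‖ := by
    apply Continuous.measurable; fun_prop
  unfold grrKernel Function.uncurry
  fun_prop

theorem norm_sub_le_of_grrKernel_le (hq : 0 < q) (ha : 0 ≤ a) {x y c δ : ℝ} (hc : 0 ≤ c)
    (hK : grrKernel g q a x y ≤ ENNReal.ofReal c) (hxy : |x - y| ≤ δ) :
    ‖g x - g y‖ ≤ (c * δ ^ a) ^ q⁻¹ := by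
  rcases eq_or_ne x y with rfl | hne
  · simp only [sub_self, norm_zero]
    exact Real.rpow_nonneg (mul_nonneg hc (Real.rpow_nonneg ((abs_nonneg _).trans hxy) _)) _
  have hdist : 0 < |x - y| ^ a := Real.rpow_pos_of_pos (abs_pos.mpr (sub_ne_zero.mpr hne)) a
  have hpow : ‖g x - g y‖ ^ q ≤ c * δ ^ a := by
    rw [grrKernel, ENNReal.ofReal_le_ofReal_iff hc, div_le_iff₀ hdist] at hK
    exact hK.trans (mul_le_mul_of_nonneg_left (Real.rpow_le_rpow (abs_nonneg _) hxy ha) hc)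
  calc ‖g x - g y‖ = (‖g x - g y‖ ^ q) ^ q⁻¹ := (Real.rpow_rpow_inv (norm_nonneg _) hq.ne').symm
    _ ≤ (c * δ ^ a) ^ q⁻¹ := Real.rpow_le_rpow (by positivity) hpow (inv_nonneg.mpr hq.le)

theorem exists_mem_grrKernel_le_and_setLIntegral_le (hg : Continuous g) {s t b P r x : ℝ}
    {J : Set ℝ} (hJ : J ⊆ Icc s t) (hJvol : volume J = ENNReal.ofReal r) (hr : 0 < r)
    (hB : ∫⁻ u in Icc s t, ∫⁻ v in Icc s t, grrKernel g q a u v ≤ ENNReal.ofReal b)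
    (hx : ∫⁻ v in Icc s t, grrKernel g q a x v ≤ ENNReal.ofReal P) :
    ∃ y ∈ J, ∫⁻ v in Icc s t, grrKernel g q a y v ≤ ENNReal.ofReal (4 * b / r) ∧
      grrKernel g q a x y ≤ ENNReal.ofReal (4 * P / r) := by
  have hK := measurable_uncurry_grrKernel (q := q) (a := a) hg
  have hvol : volume J ≠ 0 := by simpa [hJvol] using hr
  obtain ⟨y, hyJ, hyI, hyK⟩ := exists_mem_le_four_mul_setLAverage hvol (by simp [hJvol])
    (hK.lintegral_prod_right' (ν := volume.restrict (Icc s t))).aemeasurable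
    (hK.comp measurable_prodMk_left).aemeasurable
  have hcast : ∀ R, ENNReal.ofReal (4 * R / r) = 4 * (ENNReal.ofReal R / volume J) := fun R => by
    rw [hJvol, ENNReal.ofReal_div_of_pos hr, ENNReal.ofReal_mul zero_le_four, ENNReal.ofReal_ofNat,
      mul_div_assoc]
  rw [setLAverage_eq] at hyI hyK
  refine ⟨y, hyJ, ?_, ?_⟩
  · rw [hcast]
    exact hyI.trans (by gcongr; exact (lintegral_mono_set hJ).trans hB)
  · rw [hcast]
    exact hyK.trans (by gcongr; exact (lintegral_mono_set hJ).trans hx)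

end Kernel

/-- The image of `[s, t]` under the homothety of ratio `2⁻ⁿ` centred at `e`. -/
def dyadicIcc (s t e : ℝ) (n : ℕ) : Set ℝ :=
  Icc (e - (e - s) / 2 ^ n) (e + (t - e) / 2 ^ n)

section Dyadic
variable {s t e : ℝ}

theorem dyadicIcc_zero : dyadicIcc s t e 0 = Icc s t := by
  simp [dyadicIcc]

theorem mem_dyadicIcc (he : e ∈ Icc s t) (n : ℕ) : e ∈ dyadicIcc s t e n :=
  ⟨sub_le_self _ (div_nonneg (sub_nonneg.mpr he.1) (by positivity)),
    le_add_of_nonneg_right (div_nonneg (sub_nonneg.mpr he.2) (by positivity))⟩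

theorem dyadicIcc_succ_subset (he : e ∈ Icc s t) (n : ℕ) :
    dyadicIcc s t e (n + 1) ⊆ dyadicIcc s t e n := by
  have hs : 0 ≤ e - s := sub_nonneg.mpr he.1
  have ht : 0 ≤ t - e := sub_nonneg.mpr he.2
  apply Icc_subset_Icc <;> gcongr <;> norm_num

theorem dyadicIcc_subset (he : e ∈ Icc s t) (n : ℕ) : dyadicIcc s t e n ⊆ Icc s t := by
  induction n with
  | zero => exact dyadicIcc_zero.subset
  | succ n ih => exact (dyadicIcc_succ_subset he n).trans ih

theorem volume_dyadicIcc (n : ℕ) :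
    volume (dyadicIcc s t e n) = ENNReal.ofReal ((t - s) / 2 ^ n) := by
  rw [dyadicIcc, Real.volume_Icc]
  ring_nf

theorem abs_sub_le_of_mem_dyadicIcc {x y : ℝ} {n : ℕ} (hx : x ∈ dyadicIcc s t e n)
    (hy : y ∈ dyadicIcc s t e n) : |x - y| ≤ (t - s) / 2 ^ n := by
  have := Real.dist_le_of_mem_Icc hx hy
  rwa [Real.dist_eq, show e + (t - e) / 2 ^ n - (e - (e - s) / 2 ^ n) = (t - s) / 2 ^ n by ring]
    at this

end Dyadic

section Chain
variable {E : Type*} [NormedAddCommGroup E] {g : ℝ → E} {q a s t b e x₀ : ℝ}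

theorem exists_grrKernel_chain (hg : Continuous g) (hst : s < t)
    (hB : ∫⁻ u in Icc s t, ∫⁻ v in Icc s t, grrKernel g q a u v ≤ ENNReal.ofReal b)
    (he : e ∈ Icc s t) (hx₀ : x₀ ∈ Icc s t)
    (hI : ∫⁻ v in Icc s t, grrKernel g q a x₀ v ≤ ENNReal.ofReal (4 * b / (t - s))) :
    ∃ u : ℕ → ℝ, u 0 = x₀ ∧ (∀ n, u n ∈ dyadicIcc s t e n) ∧
      ∀ n, grrKernel g q a (u n) (u (n + 1)) ≤ ENNReal.ofReal (32 * b / ((t - s) / 2 ^ n) ^ 2) := by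
  set r : ℕ → ℝ := fun n => (t - s) / 2 ^ n
  have hr : ∀ n, 0 < r n := fun n => div_pos (sub_pos.mpr hst) (by positivity)
  set good : ℕ → ℝ → Prop := fun n x =>
    x ∈ dyadicIcc s t e n ∧ ∫⁻ v in Icc s t, grrKernel g q a x v ≤ ENNReal.ofReal (4 * b / r n)
  have step : ∀ n x, good n x → ∃ y, good (n + 1) y ∧
      grrKernel g q a x y ≤ ENNReal.ofReal (32 * b / r n ^ 2) := by
    rintro n x ⟨-, hxI⟩
    obtain ⟨y, hy, hyI, hyK⟩ := exists_mem_grrKernel_le_and_setLIntegral_le hg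
      (dyadicIcc_subset he (n + 1)) (volume_dyadicIcc _) (hr (n + 1)) hB hxI
    refine ⟨y, ⟨hy, hyI⟩, hyK.trans_eq ?_⟩
    rw [show (t - s) / 2 ^ (n + 1) = r n / 2 by simp only [r, pow_succ, div_div]]
    congr 1
    field_simp [(hr n).ne']
    ring
  choose! next hnext_good hnext_ker using step
  let u : ℕ → ℝ := fun n => Nat.rec x₀ next n
  have hu : ∀ n, good n (u n) := by
    intro n
    induction n with
    | zero => exact ⟨by rwa [dyadicIcc_zero], by simpa [r, u] using hI⟩
    | succ n ih => exact hnext_good n (u n) ih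
  exact ⟨u, rfl, fun n => (hu n).1, fun n => hnext_ker n (u n) (hu n)⟩

theorem norm_sub_le_of_grrKernel_chain {γ : ℝ} (hg : Continuous g) (hq : 0 < q) (hγ : 0 < γ)
    (hb : 0 ≤ b) (hst : s < t) (he : e ∈ Icc s t) {u : ℕ → ℝ}
    (hu : ∀ n, u n ∈ dyadicIcc s t e n)
    (hK : ∀ n, grrKernel g q (γ * q + 2) (u n) (u (n + 1)) ≤
      ENNReal.ofReal (32 * b / ((t - s) / 2 ^ n) ^ 2)) :
    ‖g (u 0) - g e‖ ≤ (32 * b) ^ q⁻¹ * (t - s) ^ γ / (1 - 2 ^ (-γ)) := by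
  set ρ : ℝ := 2 ^ (-γ)
  have hρ1 : ρ < 1 := Real.rpow_lt_one_of_one_lt_of_neg one_lt_two (neg_neg_of_pos hγ)
  have hρ0 : 0 ≤ ρ := by positivity
  set K := (32 * b) ^ q⁻¹ * (t - s) ^ γ
  have hst' : 0 ≤ t - s := sub_nonneg.mpr hst.le
  have hinc : ∀ n, dist (g (u n)) (g (u (n + 1))) ≤ K * ρ ^ n := by
    intro n
    set r : ℝ := (t - s) / 2 ^ n
    have hr : 0 < r := div_pos (sub_pos.mpr hst) (by positivity)
    have hdist : |u n - u (n + 1)| ≤ r :=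
      abs_sub_le_of_mem_dyadicIcc (hu n) (dyadicIcc_succ_subset he n (hu (n + 1)))
    rw [dist_eq_norm]
    calc ‖g (u n) - g (u (n + 1))‖ ≤ (32 * b / r ^ 2 * r ^ (γ * q + 2)) ^ q⁻¹ :=
          norm_sub_le_of_grrKernel_le hq (by positivity) (by positivity) (hK n) hdist
      _ = (32 * b) ^ q⁻¹ * r ^ γ := by
          rw [Real.rpow_add hr, Real.rpow_two, div_mul_eq_mul_div, mul_div_assoc,
            mul_div_cancel_right₀ _ (by positivity), Real.mul_rpow (by positivity) (by positivity),
            Real.rpow_mul hr.le, Real.rpow_rpow_inv (by positivity) hq.ne']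
      _ = K * ρ ^ n := by
          have h2 : ((2 : ℝ) ^ n) ^ γ * ρ ^ n = 1 := by
            rw [← Real.rpow_natCast_mul two_pos.le, mul_comm (n : ℝ),
              Real.rpow_mul_natCast two_pos.le, ← mul_pow, ← Real.rpow_add two_pos, add_neg_cancel,
              Real.rpow_zero, one_pow]
          rw [Real.div_rpow hst' (by positivity), div_eq_mul_inv, inv_eq_of_mul_eq_one_right h2]
          ring
  have hu_tendsto : Tendsto u atTop (𝓝 e) := by
    rw [tendsto_iff_dist_tendsto_zero]
    refine squeeze_zero (g := fun n => (t - s) / 2 ^ n) (fun n => dist_nonneg) (fun n => ?_) ?_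
    · rw [Real.dist_eq]; exact abs_sub_le_of_mem_dyadicIcc (hu n) (mem_dyadicIcc he n)
    · have h := tendsto_pow_atTop_nhds_zero_of_lt_one (r := (2 : ℝ)⁻¹) (by norm_num) (by norm_num)
      simpa [div_eq_mul_inv] using h.const_mul (t - s)
  have hsum := dist_le_tsum_of_dist_le_of_tendsto₀ _ hinc
    ((summable_geometric_of_lt_one hρ0 hρ1).mul_left K) ((hg.tendsto e).comp hu_tendsto)
  rwa [tsum_mul_left, tsum_geometric_of_lt_one hρ0 hρ1, ← div_eq_mul_inv, dist_eq_norm] at hsum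

end Chain

noncomputable def grrConstant (γ q : ℝ) : ℝ :=
  2 * 32 ^ q⁻¹ / (1 - 2 ^ (-γ))

theorem grrConstant_pos {γ : ℝ} (hγ : 0 < γ) (q : ℝ) : 0 < grrConstant γ q := by
  have : 0 < 1 - (2 : ℝ) ^ (-γ) :=
    sub_pos.mpr (Real.rpow_lt_one_of_one_lt_of_neg one_lt_two (neg_neg_of_pos hγ))
  unfold grrConstant
  positivity

section GRR
variable {E : Type*} [NormedAddCommGroup E] {g : ℝ → E} {q γ s t b : ℝ}

theorem Continuous.norm_sub_le_of_lintegral_grrKernel_le (hg : Continuous g) (hq : 0 < q)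
    (hγ : 0 < γ) (hb : 0 ≤ b) (hst : s < t)
    (hB : ∫⁻ u in Icc s t, ∫⁻ v in Icc s t, grrKernel g q (γ * q + 2) u v ≤ ENNReal.ofReal b) :
    ‖g t - g s‖ ≤ grrConstant γ q * b ^ q⁻¹ * (t - s) ^ γ := by
  have hvol : volume (Icc s t) = ENNReal.ofReal (t - s) := Real.volume_Icc
  have hI := ((measurable_uncurry_grrKernel (q := q) (a := γ * q + 2) hg).lintegral_prod_right'
    (ν := volume.restrict (Icc s t))).aemeasurable (μ := volume.restrict (Icc s t))
  obtain ⟨x₀, hx₀, hx₀I, -⟩ := exists_mem_le_four_mul_setLAverage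
    (by simpa [hvol] using hst) (by simp [hvol]) hI hI
  replace hx₀I : ∫⁻ v in Icc s t, grrKernel g q (γ * q + 2) x₀ v ≤
      ENNReal.ofReal (4 * b / (t - s)) := by
    rw [setLAverage_eq] at hx₀I
    rw [ENNReal.ofReal_div_of_pos (sub_pos.mpr hst), ENNReal.ofReal_mul zero_le_four,
      ENNReal.ofReal_ofNat, mul_div_assoc, ← hvol]
    exact hx₀I.trans (by gcongr; exact hB)
  have hchain : ∀ e ∈ Icc s t,
      ‖g x₀ - g e‖ ≤ (32 * b) ^ q⁻¹ * (t - s) ^ γ / (1 - 2 ^ (-γ)) := by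
    intro e he
    obtain ⟨u, rfl, hu, hK⟩ := exists_grrKernel_chain hg hst hB he hx₀ hx₀I
    exact norm_sub_le_of_grrKernel_chain hg hq hγ hb hst he hu hK
  calc ‖g t - g s‖ ≤ ‖g x₀ - g t‖ + ‖g x₀ - g s‖ := by
        rw [norm_sub_rev (g x₀)]; exact norm_sub_le_norm_sub_add_norm_sub _ _ _
    _ ≤ 2 * ((32 * b) ^ q⁻¹ * (t - s) ^ γ / (1 - 2 ^ (-γ))) := by
        linarith [hchain t ⟨hst.le, le_rfl⟩, hchain s ⟨le_rfl, hst.le⟩]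
    _ = grrConstant γ q * b ^ q⁻¹ * (t - s) ^ γ := by
        rw [Real.mul_rpow (by norm_num) hb, grrConstant]
        ring

theorem ContinuousOn.norm_sub_le_of_lintegral_grrKernel_le (hg : ContinuousOn g (Icc s t))
    (hq : 0 < q) (hγ : 0 < γ) (hb : 0 ≤ b) (hst : s < t)
    (hB : ∫⁻ u in Icc s t, ∫⁻ v in Icc s t, grrKernel g q (γ * q + 2) u v ≤ ENNReal.ofReal b) :
    ‖g t - g s‖ ≤ grrConstant γ q * b ^ q⁻¹ * (t - s) ^ γ := by
  set G : ℝ → E := fun x => g (projIcc s t hst.le x)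
  have hG : Continuous G :=
    hg.comp_continuous (continuous_subtype_val.comp continuous_projIcc) fun x => Subtype.prop _
  have hGg : ∀ x ∈ Icc s t, G x = g x := fun x hx => by simp [G, projIcc_of_mem _ hx]
  have hGB :
      ∫⁻ u in Icc s t, ∫⁻ v in Icc s t, grrKernel G q (γ * q + 2) u v ≤ ENNReal.ofReal b := by
    refine le_of_eq_of_le (setLIntegral_congr_fun measurableSet_Icc fun u hu => ?_) hB
    refine setLIntegral_congr_fun measurableSet_Icc fun v hv => ?_
    simp only [grrKernel, hGg u hu, hGg v hv]
  simpa only [hGg t ⟨hst.le, le_rfl⟩, hGg s ⟨le_rfl, hst.le⟩] using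
    hG.norm_sub_le_of_lintegral_grrKernel_le hq hγ hb hst hGB

end GRR

/-- **Garsia–Rodemich–Rumsey inequality in Hölder form.** For every `γ > 0`, `p ≥ 1` and
`l ∈ ℕ` there is a constant `C = C_{γ,p,l} > 0` such that for every `T > 0` and every
continuous `f : [0,T] → ℝ^l`,
`|f(t) - f(s)|/(t-s)^γ ≤ C (∫₀ᵀ∫₀ᵀ |f(u)-f(v)|^{2p}/|u-v|^{2γp+2} du dv)^{1/(2p)}`,
the inequality holding trivially (in `ℝ≥0∞`) when the right-hand side is infinite. -/
theorem garsia_rodemich_rumsey_holder (γ p : ℝ) (hγ : 0 < γ) (hp : 1 ≤ p) (l : ℕ) :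
    ∃ C : ℝ, 0 < C ∧
      ∀ (T : ℝ), 0 < T →
      ∀ f : ℝ → EuclideanSpace ℝ (Fin l), ContinuousOn f (Icc 0 T) →
      ∀ s t : ℝ, 0 ≤ s → s < t → t ≤ T →
        ENNReal.ofReal (‖f t - f s‖ / (t - s) ^ γ) ≤
          ENNReal.ofReal C *
            (∫⁻ u in Icc (0 : ℝ) T, ∫⁻ v in Icc (0 : ℝ) T,
                ENNReal.ofReal (‖f u - f v‖ ^ (2 * p) / |u - v| ^ (2 * γ * p + 2)))
              ^ (1 / (2 * p)) := by
  have hp0 : 0 < 2 * p := by linarith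
  refine ⟨grrConstant γ (2 * p), grrConstant_pos hγ _, fun T hT f hf s t hs hst htT => ?_⟩
  set B := ∫⁻ u in Icc (0 : ℝ) T, ∫⁻ v in Icc (0 : ℝ) T,
    ENNReal.ofReal (‖f u - f v‖ ^ (2 * p) / |u - v| ^ (2 * γ * p + 2))
  rcases eq_or_ne B ∞ with hB | hB
  · rw [hB, ENNReal.top_rpow_of_pos (by positivity),
      ENNReal.mul_top (by simpa using grrConstant_pos hγ (2 * p))]
    exact le_top
  have hsub : Icc s t ⊆ Icc 0 T := Icc_subset_Icc hs htT
  have hBst : ∫⁻ u in Icc s t, ∫⁻ v in Icc s t, grrKernel f (2 * p) (γ * (2 * p) + 2) u v ≤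
      ENNReal.ofReal B.toReal := by
    rw [ENNReal.ofReal_toReal hB, show γ * (2 * p) + 2 = 2 * γ * p + 2 by ring]
    exact (lintegral_mono fun u => lintegral_mono_set hsub).trans (lintegral_mono_set hsub)
  have hnorm := (hf.mono hsub).norm_sub_le_of_lintegral_grrKernel_le hp0 hγ
    ENNReal.toReal_nonneg hst hBst
  rw [← ENNReal.ofReal_toReal hB, ENNReal.ofReal_rpow_of_nonneg ENNReal.toReal_nonneg (by positivity),
    ← ENNReal.ofReal_mul (grrConstant_pos hγ _).le, one_div]
  exact ENNReal.ofReal_le_ofReal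
    ((div_le_iff₀ (Real.rpow_pos_of_pos (sub_pos.mpr hst) γ)).mpr hnorm)
end

section
/- Hölder error of piecewise linear interpolation under a log-modulus of continuity (deterministic content of Lemma 3.3): Let 0 < H ≤ 1, 0 ≤ γ < H, T > 0, K ≥ 0 and h* ∈ (0, min(T, e^{−1})]. Let f : [0,T] → ℝ^m be continuous with |f(t) − f(s)| ≤ K (t−s)^H √(log(1/(t−s))) whenever 0 < t−s ≤ h*. For n ∈ ℕ let f^n be the piecewise linear interpolation of f on the uniform grid {kT/n : k = 0,…,n}, i.e. f^n(t) = f(t_k) + ((t−t_k)/(T/n))(f(t_{k+1}) − f(t_k)) for t ∈ [t_k, t_{k+1}], t_k = kT/n. Then there exist a constant C > 0 and N₀ ∈ ℕ, depending only on H, γ, T, h*, such that for all n ≥ N₀: sup_{t∈[0,T]} |f^n(t) − f(t)| + sup_{0≤s<t≤T} |(f^n(t) − f(t)) − (f^n(s) − f(s))|/(t−s)^γ ≤ C K √(log n) · n^{−(H−γ)}. -/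
/-!
Write `g = fⁿ - f` and `h = T / n`. On a cell `[k h, (k + 1) h]` the interpolant is affine, so
`g t - g s = ((t - s) / h) • (f ((k + 1) h) - f (k h)) - (f t - f s)`. The modulus
`φ_a(u) = u ^ a √(log (1 / u))` is almost increasing below `e⁻¹`:
`φ_a(u) ≤ √(1 + 1 / (2a)) φ_a(h)` for `u ≤ h ≤ e⁻¹`. With `φ_H(u) = u ^ γ φ_{H-γ}(u)` this
gives `‖g t - g s‖ ≤ B (t - s) ^ γ` on each cell, where `B ≍ K φ_{H-γ}(h)`. Since `g` vanishes
on the grid, the cellwise bound yields `‖g‖ ≤ B h ^ γ` and, splitting at the grid point between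
`s` and `t` when `t - s < h`, the global bound `‖g t - g s‖ ≤ 2 B (t - s) ^ γ`. Finally
`φ_{H-γ}(T / n) ≲ n ^ (-(H - γ)) √(log n)`.
-/

open Set
open scoped ENNReal

noncomputable section

/-- `ℝ^m` with the Euclidean norm. -/
abbrev Vec (m : ℕ) := EuclideanSpace ℝ (Fin m)

/-- Sup "norm" `sup_{t ∈ [a,b]} ‖f t‖` as an extended nonnegative real. -/
noncomputable def supENorm {E : Type*} [NormedAddCommGroup E] (a b : ℝ) (f : ℝ → E) : ℝ≥0∞ :=
  ⨆ t : Icc a b, ENNReal.ofReal ‖f t‖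

/-- γ-Hölder seminorm `sup_{a ≤ s < t ≤ b} ‖f t - f s‖/(t-s)^γ` as an extended
nonnegative real. -/
noncomputable def holderENorm {E : Type*} [NormedAddCommGroup E] (γ a b : ℝ) (f : ℝ → E) :
    ℝ≥0∞ :=
  ⨆ p : {p : ℝ × ℝ // a ≤ p.1 ∧ p.1 < p.2 ∧ p.2 ≤ b},
    ENNReal.ofReal (‖f p.1.2 - f p.1.1‖ / (p.1.2 - p.1.1) ^ γ)

/-- The piecewise linear interpolation of `f` on the uniform grid `{kT/n : k = 0,…,n}`:
for `t ∈ [t_k, t_{k+1}]`, `f^n(t) = f(t_k) + ((t - t_k)/(T/n)) (f(t_{k+1}) - f(t_k))`. -/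
noncomputable def interp {E : Type*} [NormedAddCommGroup E] [NormedSpace ℝ E]
    (T : ℝ) (n : ℕ) (f : ℝ → E) (t : ℝ) : E :=
  f ((⌊t * n / T⌋ : ℝ) * T / n) +
    ((t - (⌊t * n / T⌋ : ℝ) * T / n) / (T / n)) •
      (f (((⌊t * n / T⌋ : ℝ) + 1) * T / n) - f ((⌊t * n / T⌋ : ℝ) * T / n))

open Real

def logModulus (a u : ℝ) : ℝ := u ^ a * √(log (1 / u))

lemma logModulus_nonneg (a : ℝ) {u : ℝ} (hu : 0 ≤ u) : 0 ≤ logModulus a u := by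
  unfold logModulus; positivity

lemma logModulus_eq_rpow_mul (a b : ℝ) {u : ℝ} (hu : 0 < u) :
    logModulus a u = u ^ b * logModulus (a - b) u := by
  rw [logModulus, logModulus, ← mul_assoc, ← rpow_add hu, add_sub_cancel]

lemma one_le_log_one_div {h : ℝ} (hh0 : 0 < h) (hh : h ≤ exp (-1)) : 1 ≤ log (1 / h) := by
  rw [one_div, log_inv, le_neg, ← log_exp (-1)]
  exact log_le_log hh0 hh

lemma rpow_sq_mul_log_one_div_le {a r : ℝ} (ha : 0 < a) (hr0 : 0 < r) (hr1 : r ≤ 1) :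
    (r ^ a) ^ 2 * log (1 / r) ≤ 1 / (2 * a) := by
  have key := abs_log_mul_self_rpow_lt r (2 * a) hr0 hr1 (by positivity)
  rw [mul_comm 2 a, rpow_mul hr0.le, rpow_two] at key
  rw [one_div r, log_inv, mul_comm 2 a]
  linarith [neg_abs_le (log r * (r ^ a) ^ 2)]

lemma logModulus_le_of_le {a u h : ℝ} (ha : 0 < a) (hu : 0 < u) (huh : u ≤ h)
    (hh : h ≤ exp (-1)) :
    logModulus a u ≤ √(1 + 1 / (2 * a)) * logModulus a h := by
  have hh0 : 0 < h := hu.trans_le huh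
  have hL := one_le_log_one_div hh0 hh
  obtain ⟨r, hr0, hr1, rfl⟩ : ∃ r, 0 < r ∧ r ≤ 1 ∧ u = h * r :=
    ⟨u / h, div_pos hu hh0, (div_le_one hh0).2 huh, by field_simp⟩
  have hrlog := rpow_sq_mul_log_one_div_le ha hr0 hr1
  have hr1' : (r ^ a) ^ 2 ≤ 1 := pow_le_one₀ (by positivity) (rpow_le_one hr0.le hr1 ha.le)
  have hlog : log (1 / (h * r)) = log (1 / h) + log (1 / r) := by
    rw [← one_div_mul_one_div, log_mul (by positivity) (by positivity)]
  have key : (h ^ a * r ^ a) ^ 2 * log (1 / (h * r)) ≤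
      (1 + 1 / (2 * a)) * ((h ^ a) ^ 2 * log (1 / h)) := by
    rw [hlog, mul_pow]
    have : (r ^ a) ^ 2 * log (1 / r) ≤ log (1 / h) / (2 * a) :=
      hrlog.trans (div_le_div_of_nonneg_right hL (by positivity))
    calc (h ^ a) ^ 2 * (r ^ a) ^ 2 * (log (1 / h) + log (1 / r))
        = (h ^ a) ^ 2 * ((r ^ a) ^ 2 * log (1 / h) + (r ^ a) ^ 2 * log (1 / r)) := by ring
      _ ≤ (h ^ a) ^ 2 * (log (1 / h) + log (1 / h) / (2 * a)) := by
          gcongr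
          exact mul_le_of_le_one_left (by linarith) hr1'
      _ = _ := by ring
  calc logModulus a (h * r) = √((h ^ a * r ^ a) ^ 2 * log (1 / (h * r))) := by
        rw [logModulus, mul_rpow hh0.le hr0.le, sqrt_mul (by positivity), sqrt_sq (by positivity)]
    _ ≤ √((1 + 1 / (2 * a)) * ((h ^ a) ^ 2 * log (1 / h))) := sqrt_le_sqrt key
    _ = √(1 + 1 / (2 * a)) * logModulus a h := by
        rw [logModulus, sqrt_mul (by positivity), sqrt_mul (by positivity), sqrt_sq (by positivity)]

lemma div_mul_logModulus_add_logModulus_le {H γ u h : ℝ} (hγ1 : γ ≤ 1) (hγH : γ < H)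
    (hu : 0 < u) (huh : u ≤ h) (hh : h ≤ exp (-1)) :
    u / h * logModulus H h + logModulus H u ≤
      (1 + √(1 + 1 / (2 * (H - γ)))) * logModulus (H - γ) h * u ^ γ := by
  have hh0 : 0 < h := hu.trans_le huh
  have hM := logModulus_nonneg (H - γ) hh0.le
  have hlin : u / h * h ^ γ ≤ u ^ γ := by
    calc u / h * h ^ γ ≤ (u / h) ^ γ * h ^ γ := by
          gcongr
          simpa using rpow_le_rpow_of_exponent_ge (div_pos hu hh0) ((div_le_one hh0).2 huh) hγ1
      _ = u ^ γ := by rw [div_rpow hu.le hh0.le, div_mul_cancel₀ _ (by positivity)]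
  have hmod := logModulus_le_of_le (sub_pos.2 hγH) hu huh hh
  rw [logModulus_eq_rpow_mul H γ hh0, logModulus_eq_rpow_mul H γ hu]
  calc u / h * (h ^ γ * logModulus (H - γ) h) + u ^ γ * logModulus (H - γ) u
      ≤ u ^ γ * logModulus (H - γ) h +
          u ^ γ * (√(1 + 1 / (2 * (H - γ))) * logModulus (H - γ) h) := by
        rw [← mul_assoc]
        gcongr
    _ = _ := by ring

lemma logModulus_div_natCast_le {a T : ℝ} {n : ℕ} (hT : 0 < T) (hn : 1 ≤ log n) :
    logModulus a (T / n) ≤ T ^ a * √(1 + |log T|) * (√(log n) * (n : ℝ) ^ (-a)) := by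
  have hn0 : (0 : ℝ) < n := by
    rcases n.eq_zero_or_pos with rfl | hpos
    · norm_num at hn
    · exact_mod_cast hpos
  have hlog : log (1 / (T / n)) ≤ (1 + |log T|) * log n := by
    rw [one_div_div, log_div hn0.ne' hT.ne']
    nlinarith [neg_abs_le (log T), abs_nonneg (log T)]
  calc logModulus a (T / n) ≤ (T ^ a * (n : ℝ) ^ (-a)) * √((1 + |log T|) * log n) := by
        rw [logModulus, div_rpow hT.le hn0.le, rpow_neg hn0.le, div_eq_mul_inv]
        gcongr
    _ = _ := by rw [sqrt_mul (by positivity)]; ring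

lemma supENorm_le_ofReal {E : Type*} [NormedAddCommGroup E] {a b c : ℝ} {f : ℝ → E}
    (hf : ∀ t ∈ Icc a b, ‖f t‖ ≤ c) : supENorm a b f ≤ ENNReal.ofReal c :=
  iSup_le fun t => ENNReal.ofReal_le_ofReal (hf t t.2)

lemma holderENorm_le_ofReal {E : Type*} [NormedAddCommGroup E] {γ a b c : ℝ} {f : ℝ → E}
    (hf : ∀ s t, a ≤ s → s < t → t ≤ b → ‖f t - f s‖ ≤ c * (t - s) ^ γ) :
    holderENorm γ a b f ≤ ENNReal.ofReal c :=
  iSup_le fun ⟨⟨s, t⟩, hs, hst, htb⟩ => ENNReal.ofReal_le_ofReal <|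
    (div_le_iff₀ (rpow_pos_of_pos (sub_pos.2 hst) γ)).2 (hf s t hs hst htb)

lemma exists_cell {h s : ℝ} {n : ℕ} (hh : 0 < h) (hs : 0 ≤ s) (hsn : s < n * h) :
    ∃ k < n, k * h ≤ s ∧ s < (k + 1) * h := by
  have hsh : 0 ≤ s / h := div_nonneg hs hh.le
  exact ⟨⌊s / h⌋₊, (Nat.floor_lt hsh).2 ((div_lt_iff₀ hh).2 hsn),
    (le_div_iff₀ hh).1 (Nat.floor_le hsh), (div_lt_iff₀ hh).1 (Nat.lt_floor_add_one _)⟩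

section Cellwise

variable {E : Type*} [NormedAddCommGroup E] {g : ℝ → E} {h γ B : ℝ} {n : ℕ}

lemma norm_le_of_cellwise (hh : 0 < h) (hγ : 0 ≤ γ) (hB : 0 ≤ B)
    (hzero : ∀ k ≤ n, g (k * h) = 0)
    (hcell : ∀ k < n, ∀ s t, k * h ≤ s → s < t → t ≤ (k + 1) * h →
      ‖g t - g s‖ ≤ B * (t - s) ^ γ)
    {t : ℝ} (ht0 : 0 ≤ t) (htn : t ≤ n * h) : ‖g t‖ ≤ B * h ^ γ := by
  have hBh : 0 ≤ B * h ^ γ := by positivity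
  rcases htn.lt_or_eq with htn | rfl
  · obtain ⟨k, hk, hkt, htk⟩ := exists_cell hh ht0 htn
    rcases hkt.lt_or_eq with hkt | rfl
    · calc ‖g t‖ = ‖g t - g (k * h)‖ := by rw [hzero k hk.le, sub_zero]
        _ ≤ B * (t - k * h) ^ γ := hcell k hk _ _ le_rfl hkt htk.le
        _ ≤ B * h ^ γ := by gcongr; linarith
    · rwa [hzero k hk.le, norm_zero]
  · rwa [hzero n le_rfl, norm_zero]

lemma norm_sub_le_of_cellwise_of_sub_lt (hh : 0 < h) (hγ : 0 ≤ γ) (hB : 0 ≤ B)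
    (hcell : ∀ k < n, ∀ s t, k * h ≤ s → s < t → t ≤ (k + 1) * h →
      ‖g t - g s‖ ≤ B * (t - s) ^ γ)
    {s t : ℝ} (hs0 : 0 ≤ s) (hst : s < t) (htn : t ≤ n * h) (hts : t - s < h) :
    ‖g t - g s‖ ≤ 2 * B * (t - s) ^ γ := by
  obtain ⟨k, hk, hks, hsk⟩ := exists_cell hh hs0 (hst.trans_le htn)
  rcases le_or_gt t ((k + 1) * h) with htk | htk
  · have : 0 ≤ B * (t - s) ^ γ := by have := sub_pos.2 hst; positivity
    linarith [hcell k hk s t hks hst htk]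
  -- `s` and `t` lie in adjacent cells: split at the grid point `u` between them
  set u : ℝ := (k + 1) * h
  have hk1 : k + 1 < n := by
    have : ((k + 1 : ℕ) : ℝ) * h < n * h := by push_cast; linarith
    exact_mod_cast lt_of_mul_lt_mul_right this hh.le
  have hsu := hcell k hk s u hks hsk le_rfl
  have hut := hcell (k + 1) hk1 u t (by push_cast; rfl) htk (by push_cast; linarith)
  have htu : (t - u) ^ γ ≤ (t - s) ^ γ := by gcongr
  have hus : (u - s) ^ γ ≤ (t - s) ^ γ := by gcongr
  calc ‖g t - g s‖ ≤ ‖g t - g u‖ + ‖g u - g s‖ :=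
        norm_sub_le_norm_sub_add_norm_sub _ _ _
    _ ≤ B * (t - u) ^ γ + B * (u - s) ^ γ := add_le_add hut hsu
    _ ≤ 2 * B * (t - s) ^ γ := by nlinarith

lemma norm_sub_le_of_cellwise (hh : 0 < h) (hγ : 0 ≤ γ) (hB : 0 ≤ B)
    (hzero : ∀ k ≤ n, g (k * h) = 0)
    (hcell : ∀ k < n, ∀ s t, k * h ≤ s → s < t → t ≤ (k + 1) * h →
      ‖g t - g s‖ ≤ B * (t - s) ^ γ)
    {s t : ℝ} (hs0 : 0 ≤ s) (hst : s < t) (htn : t ≤ n * h) :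
    ‖g t - g s‖ ≤ 2 * B * (t - s) ^ γ := by
  rcases lt_or_ge (t - s) h with hts | hts
  · exact norm_sub_le_of_cellwise_of_sub_lt hh hγ hB hcell hs0 hst htn hts
  have hpow : h ^ γ ≤ (t - s) ^ γ := rpow_le_rpow hh.le hts hγ
  calc ‖g t - g s‖ ≤ ‖g t‖ + ‖g s‖ := norm_sub_le _ _
    _ ≤ B * h ^ γ + B * h ^ γ :=
        add_le_add (norm_le_of_cellwise hh hγ hB hzero hcell (hs0.trans hst.le) htn)
          (norm_le_of_cellwise hh hγ hB hzero hcell hs0 (hst.le.trans htn))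
    _ ≤ 2 * B * (t - s) ^ γ := by nlinarith

lemma supENorm_add_holderENorm_le_of_cellwise (hh : 0 < h) (hh1 : h ≤ 1) (hγ : 0 ≤ γ)
    (hB : 0 ≤ B) {b : ℝ} (hb : b ≤ n * h) (hzero : ∀ k ≤ n, g (k * h) = 0)
    (hcell : ∀ k < n, ∀ s t, k * h ≤ s → s < t → t ≤ (k + 1) * h →
      ‖g t - g s‖ ≤ B * (t - s) ^ γ) :
    supENorm 0 b g + holderENorm γ 0 b g ≤ ENNReal.ofReal (3 * B) := by
  have hpow : h ^ γ ≤ 1 := rpow_le_one hh.le hh1 hγ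
  calc supENorm 0 b g + holderENorm γ 0 b g
      ≤ ENNReal.ofReal (B * h ^ γ) + ENNReal.ofReal (2 * B) :=
        add_le_add
          (supENorm_le_ofReal fun t ht =>
            norm_le_of_cellwise hh hγ hB hzero hcell ht.1 (ht.2.trans hb))
          (holderENorm_le_ofReal fun s t hs hst htb =>
            norm_sub_le_of_cellwise hh hγ hB hzero hcell hs hst (htb.trans hb))
    _ = ENNReal.ofReal (B * h ^ γ + 2 * B) :=
        (ENNReal.ofReal_add (by positivity) (by positivity)).symm
    _ ≤ ENNReal.ofReal (3 * B) := by gcongr; nlinarith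

end Cellwise

section Interpolation

variable {E : Type*} [NormedAddCommGroup E] [NormedSpace ℝ E] {T : ℝ} {n : ℕ}

lemma interp_eq_of_mem_cell (hT : 0 < T) (hn : 0 < n) (f : ℝ → E) {k : ℕ} {t : ℝ}
    (hkt : k * (T / n) ≤ t) (htk : t ≤ (k + 1) * (T / n)) :
    interp T n f t = f (k * (T / n)) +
      ((t - k * (T / n)) / (T / n)) • (f ((k + 1) * (T / n)) - f (k * (T / n))) := by
  have hh : 0 < T / n := div_pos hT (Nat.cast_pos.2 hn)
  have hfloor : t * n / T = t / (T / n) := (div_div_eq_mul_div t T n).symm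
  rcases htk.lt_or_eq with htk | rfl
  · have hk : ⌊t * n / T⌋ = k := by
      rw [hfloor, Int.floor_eq_iff]
      push_cast
      exact ⟨(le_div_iff₀ hh).2 hkt, (div_lt_iff₀ hh).2 htk⟩
    rw [interp, hk]
    push_cast
    simp only [mul_div_assoc]
  · -- at the right end point the floor jumps to `k + 1`, and both formulas give `f t`
    have hk : ⌊(k + 1) * (T / n) * n / T⌋ = k + 1 := by
      rw [hfloor, mul_div_cancel_right₀ _ hh.ne']
      exact_mod_cast Int.floor_natCast (k + 1)
    rw [interp, hk]
    push_cast
    simp only [mul_div_assoc, sub_self, zero_div, zero_smul, add_zero]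
    rw [show (k + 1) * (T / n) - k * (T / n) = T / n by ring, div_self hh.ne', one_smul,
      add_sub_cancel]

lemma interp_natCast_mul (hT : 0 < T) (hn : 0 < n) (f : ℝ → E) (k : ℕ) :
    interp T n f (k * (T / n)) = f (k * (T / n)) := by
  have hh : 0 < T / n := div_pos hT (Nat.cast_pos.2 hn)
  rw [interp_eq_of_mem_cell hT hn f le_rfl (by linarith), sub_self, zero_div, zero_smul,
    add_zero]

lemma norm_interp_sub_sub_le (hT : 0 < T) (hn : 0 < n) (f : ℝ → E) {k : ℕ} {s t : ℝ}
    (hks : k * (T / n) ≤ s) (hst : s ≤ t) (htk : t ≤ (k + 1) * (T / n)) :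
    ‖(interp T n f t - f t) - (interp T n f s - f s)‖ ≤
      (t - s) / (T / n) * ‖f ((k + 1) * (T / n)) - f (k * (T / n))‖ + ‖f t - f s‖ := by
  have hh : 0 < T / n := div_pos hT (Nat.cast_pos.2 hn)
  have hslope : interp T n f t - interp T n f s =
      ((t - s) / (T / n)) • (f ((k + 1) * (T / n)) - f (k * (T / n))) := by
    rw [interp_eq_of_mem_cell hT hn f (hks.trans hst) htk,
      interp_eq_of_mem_cell hT hn f hks (hst.trans htk), add_sub_add_left_eq_sub, ← sub_smul]
    congr 1
    ring
  calc ‖(interp T n f t - f t) - (interp T n f s - f s)‖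
      = ‖(interp T n f t - interp T n f s) - (f t - f s)‖ := by congr 1; abel
    _ ≤ ‖interp T n f t - interp T n f s‖ + ‖f t - f s‖ := norm_sub_le _ _
    _ = _ := by
        rw [hslope, norm_smul, Real.norm_of_nonneg (div_nonneg (sub_nonneg.2 hst) hh.le)]

lemma norm_interp_sub_sub_le_logModulus {H γ K : ℝ} {f : ℝ → E} (hγ1 : γ ≤ 1) (hγH : γ < H)
    (hT : 0 < T) (hn : 0 < n) (hK : 0 ≤ K) (hhe : T / n ≤ exp (-1))
    (hf : ∀ s t, 0 ≤ s → s < t → t ≤ T → t - s ≤ T / n →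
      ‖f t - f s‖ ≤ K * logModulus H (t - s))
    {k : ℕ} (hk : k < n) {s t : ℝ}
    (hks : k * (T / n) ≤ s) (hst : s < t) (htk : t ≤ (k + 1) * (T / n)) :
    ‖(interp T n f t - f t) - (interp T n f s - f s)‖ ≤
      (1 + √(1 + 1 / (2 * (H - γ)))) * K * logModulus (H - γ) (T / n) * (t - s) ^ γ := by
  have hh : 0 < T / n := div_pos hT (Nat.cast_pos.2 hn)
  have hkn : ((k : ℝ) + 1) * (T / n) ≤ T := by
    calc ((k : ℝ) + 1) * (T / n) ≤ n * (T / n) := by gcongr; exact_mod_cast hk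
      _ = T := mul_div_cancel₀ T (Nat.cast_pos.2 hn).ne'
  have hkk : ((k : ℝ) + 1) * (T / n) - k * (T / n) = T / n := by ring
  have hts : t - s ≤ T / n := by linarith
  have hk0 : 0 ≤ k * (T / n) := mul_nonneg k.cast_nonneg hh.le
  have hstep := hf _ _ hk0 (by linarith) hkn hkk.le
  rw [hkk] at hstep
  calc ‖(interp T n f t - f t) - (interp T n f s - f s)‖
      ≤ (t - s) / (T / n) * (K * logModulus H (T / n)) + K * logModulus H (t - s) := by
        grw [norm_interp_sub_sub_le hT hn f hks hst.le htk, hstep,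
          hf s t (hk0.trans hks) hst (by linarith) hts]
        exact div_nonneg (by linarith) hh.le
    _ = K * ((t - s) / (T / n) * logModulus H (T / n) + logModulus H (t - s)) := by ring
    _ ≤ K * ((1 + √(1 + 1 / (2 * (H - γ)))) * logModulus (H - γ) (T / n) * (t - s) ^ γ) := by
        gcongr
        exact div_mul_logModulus_add_logModulus_le hγ1 hγH (sub_pos.2 hst) hts hhe
    _ = _ := by ring

end Interpolation

theorem interpolation_holder_error_general (m : ℕ) (H γ T hstar : ℝ)
    (hH1 : H ≤ 1) (hγ0 : 0 ≤ γ) (hγH : γ < H) (hT : 0 < T)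
    (hhs1 : 0 < hstar) (hhs2 : hstar ≤ min T (Real.exp (-1))) :
    ∃ C : ℝ, 0 < C ∧ ∃ N₀ : ℕ,
      ∀ K : ℝ, 0 ≤ K →
      ∀ f : ℝ → Vec m, ContinuousOn f (Icc 0 T) →
        (∀ s t : ℝ, 0 ≤ s → s < t → t ≤ T → t - s ≤ hstar →
          ‖f t - f s‖ ≤ K * (t - s) ^ H * Real.sqrt (Real.log (1 / (t - s)))) →
      ∀ n : ℕ, N₀ ≤ n →
        supENorm 0 T (fun t => interp T n f t - f t) +
            holderENorm γ 0 T (fun t => interp T n f t - f t) ≤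
          ENNReal.ofReal
            (C * K * Real.sqrt (Real.log n) * (n : ℝ) ^ (-(H - γ))) := by
  set c := 1 + √(1 + 1 / (2 * (H - γ)))
  refine ⟨3 * c * T ^ (H - γ) * √(1 + |log T|), by positivity, max 3 ⌈T / hstar⌉₊, ?_⟩
  intro K hK f _ hf n hn
  have hn3 : (3 : ℝ) ≤ n := by exact_mod_cast le_of_max_le_left hn
  have hn0 : 0 < n := by exact_mod_cast (show (0 : ℝ) < n by linarith)
  have hh : 0 < T / n := div_pos hT (by linarith)
  have hhs : T / n ≤ hstar := (div_le_comm₀ (by linarith) hhs1).2 <|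
    (Nat.le_ceil _).trans (by exact_mod_cast le_of_max_le_right hn)
  have hhe : T / n ≤ exp (-1) := hhs.trans (hhs2.trans (min_le_right _ _))
  have hlog : 1 ≤ log n := by
    rw [le_log_iff_exp_le (by linarith)]
    linarith [exp_one_lt_d9]
  have hbound := logModulus_div_natCast_le (a := H - γ) hT hlog
  calc supENorm 0 T (fun t => interp T n f t - f t) +
        holderENorm γ 0 T (fun t => interp T n f t - f t)
      ≤ ENNReal.ofReal (3 * (c * K * logModulus (H - γ) (T / n))) :=
        supENorm_add_holderENorm_le_of_cellwise hh (hhe.trans (exp_le_one_iff.2 (by norm_num)))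
          hγ0 (mul_nonneg (by positivity) (logModulus_nonneg _ hh.le))
          (mul_div_cancel₀ T (by linarith : (n : ℝ) ≠ 0)).ge
          (fun k _ => by rw [interp_natCast_mul hT hn0, sub_self])
          (fun k hk s t => norm_interp_sub_sub_le_logModulus (hγH.le.trans hH1) hγH hT hn0 hK
            hhe (fun s t hs hst htT hts => by
              simpa only [logModulus, mul_assoc] using hf s t hs hst htT (hts.trans hhs)) hk)
    _ ≤ _ := by
        refine ENNReal.ofReal_le_ofReal ?_
        have hcK : 0 ≤ 3 * c * K := by positivity
        nlinarith [mul_le_mul_of_nonneg_left hbound hcK]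

/-- **Hölder error of piecewise linear interpolation under a log-modulus of continuity.**
If `|f(t) - f(s)| ≤ K (t-s)^H √(log(1/(t-s)))` for `0 < t-s ≤ h*`, then there are `C > 0` and
`N₀`, depending only on `H, γ, T, h*`, such that for all `n ≥ N₀` the γ-Hölder norm (sup norm
plus γ-Hölder seminorm on `[0,T]`) of `f^n - f` is at most `C K √(log n) n^{-(H-γ)}`. -/
theorem interpolation_holder_error (m : ℕ) (H γ T hstar : ℝ)
    (hH0 : 0 < H) (hH1 : H ≤ 1) (hγ0 : 0 ≤ γ) (hγH : γ < H) (hT : 0 < T)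
    (hhs1 : 0 < hstar) (hhs2 : hstar ≤ min T (Real.exp (-1))) :
    ∃ C : ℝ, 0 < C ∧ ∃ N₀ : ℕ,
      ∀ K : ℝ, 0 ≤ K →
      ∀ f : ℝ → Vec m, ContinuousOn f (Icc 0 T) →
        (∀ s t : ℝ, 0 ≤ s → s < t → t ≤ T → t - s ≤ hstar →
          ‖f t - f s‖ ≤ K * (t - s) ^ H * Real.sqrt (Real.log (1 / (t - s)))) →
      ∀ n : ℕ, N₀ ≤ n →
        supENorm 0 T (fun t => interp T n f t - f t) +
            holderENorm γ 0 T (fun t => interp T n f t - f t) ≤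
          ENNReal.ofReal
            (C * K * Real.sqrt (Real.log n) * (n : ℝ) ^ (-(H - γ))) :=
  interpolation_holder_error_general m H γ T hstar hH1 hγ0 hγH hT hhs1 hhs2

end
end

section
/- A discrete Hölder bound on grid points lifts to the piecewise linear interpolation (from the proof of Proposition 4.5): Let 0 < γ ≤ 1, T > 0, n ∈ ℕ, and let w : [0,T] → ℝ^d be affine on each interval [kT/n, (k+1)T/n], k = 0,…,n−1. Suppose there is ε ≥ 0 such that |w(qT/n) − w(pT/n)| ≤ ε ((q−p)T/n)^γ for all 0 ≤ p ≤ q ≤ n. Then there is a constant C_γ, depending only on γ, such that |w(t) − w(s)| ≤ C_γ ε (t−s)^γ for all 0 ≤ s ≤ t ≤ T. -/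
open Set

noncomputable section

/-
On a single cell the increment of `w` is a fraction `x ∈ [0,1]` of the cell increment, and
`x ≤ x ^ γ` for `γ ≤ 1`, so the Hölder bound of the cell passes to all its subintervals.
Two arbitrary times `s ≤ t` are then joined through the grid points `(k+1)h ≤ mh` that bound
the cells of `s` and `t`: the two partial cells and the run of whole cells between them each
contribute at most `ε (t - s) ^ γ`, which gives the constant `3`.
-/

theorem exists_grid_cell_mem {h u : ℝ} {n : ℕ} (hn : 0 < n) (hu : 0 ≤ u) (hun : u ≤ n * h) :
    ∃ k < n, k * h ≤ u ∧ u ≤ (k + 1) * h := by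
  induction n with
  | zero => exact absurd hn (lt_irrefl 0)
  | succ n ih =>
    rcases n.eq_zero_or_pos with rfl | hpos
    · exact ⟨0, Nat.one_pos, by simpa using hu, by simpa using hun⟩
    by_cases hlast : u ≤ n * h
    · obtain ⟨k, hk, hku⟩ := ih hpos hlast
      exact ⟨k, hk.trans n.lt_succ_self, hku⟩
    · exact ⟨n, n.lt_succ_self, (not_le.1 hlast).le, by exact_mod_cast hun⟩

section

variable {E : Type*} [NormedAddCommGroup E] [NormedSpace ℝ E] {w : ℝ → E} {ε γ : ℝ}

theorem norm_sub_le_of_affine_on_Icc {a b : ℝ} (hab : a < b) (hγ : γ ≤ 1)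
    (haff : ∀ t ∈ Icc a b, w t = w a + ((t - a) / (b - a)) • (w b - w a))
    (hend : ‖w b - w a‖ ≤ ε * (b - a) ^ γ) {s t : ℝ} (has : a ≤ s) (hst : s ≤ t)
    (htb : t ≤ b) :
    ‖w t - w s‖ ≤ ε * (t - s) ^ γ := by
  have hba : 0 < b - a := sub_pos.2 hab
  set x := (t - s) / (b - a)
  have hx0 : 0 ≤ x := div_nonneg (sub_nonneg.2 hst) hba.le
  have hx1 : x ≤ 1 := (div_le_one hba).2 (by linarith)
  have hincr : w t - w s = x • (w b - w a) := by
    rw [haff t ⟨has.trans hst, htb⟩, haff s ⟨has, hst.trans htb⟩, add_sub_add_left_eq_sub,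
      ← sub_smul, div_sub_div_same, sub_sub_sub_cancel_right]
  calc ‖w t - w s‖ = x * ‖w b - w a‖ := by
        rw [hincr, norm_smul, Real.norm_of_nonneg hx0]
    _ ≤ x ^ γ * (ε * (b - a) ^ γ) :=
        mul_le_mul (Real.self_le_rpow_of_le_one hx0 hx1 hγ) hend (norm_nonneg _)
          (Real.rpow_nonneg hx0 γ)
    _ = ε * (t - s) ^ γ := by
        rw [mul_left_comm, ← Real.mul_rpow hx0 hba.le, div_mul_cancel₀ _ hba.ne']

theorem norm_sub_le_three_mul_of_grid {h : ℝ} {n : ℕ} (hh : 0 < h) (hn : 0 < n)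
    (hγ0 : 0 ≤ γ) (hγ1 : γ ≤ 1) (hε : 0 ≤ ε)
    (haff : ∀ k < n, ∀ t ∈ Icc (k * h) ((k + 1) * h),
      w t = w (k * h) + ((t - k * h) / h) • (w ((k + 1) * h) - w (k * h)))
    (hgrid : ∀ p q : ℕ, p ≤ q → q ≤ n →
      ‖w (q * h) - w (p * h)‖ ≤ ε * ((q - p) * h) ^ γ)
    {s t : ℝ} (hs : 0 ≤ s) (hst : s ≤ t) (htn : t ≤ n * h) :
    ‖w t - w s‖ ≤ 3 * ε * (t - s) ^ γ := by
  obtain ⟨k, hk, hks, hsk⟩ := exists_grid_cell_mem hn hs (hst.trans htn)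
  obtain ⟨m, hm, hmt, htm⟩ := exists_grid_cell_mem hn (hs.trans hst) htn
  have hcell : ∀ k < n, ∀ {s t : ℝ}, k * h ≤ s → s ≤ t → t ≤ (k + 1) * h →
      ‖w t - w s‖ ≤ ε * (t - s) ^ γ := by
    intro k hk s t hks hst htk
    have hlen : ((k : ℝ) + 1) * h - k * h = h := by ring
    exact norm_sub_le_of_affine_on_Icc (by linarith) hγ1 (by rw [hlen]; exact haff k hk)
      (by simpa [hlen] using hgrid k (k + 1) k.le_succ hk) hks hst htk
  have hpow_le : ∀ x, 0 ≤ x → x ≤ t - s → ε * x ^ γ ≤ ε * (t - s) ^ γ := by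
    intro x hx0 hxt
    gcongr
  rcases le_or_gt m k with hmk | hkm
  · have htk : t ≤ (k + 1) * h := htm.trans (by gcongr)
    calc ‖w t - w s‖ ≤ ε * (t - s) ^ γ := hcell k hk hks hst htk
      _ ≤ 3 * (ε * (t - s) ^ γ) := by
          have := mul_nonneg hε (Real.rpow_nonneg (sub_nonneg.2 hst) γ)
          linarith
      _ = 3 * ε * (t - s) ^ γ := by ring
  have hkm_real : ((k : ℝ) + 1) ≤ m := by exact_mod_cast hkm
  have hkm_h : ((k : ℝ) + 1) * h ≤ m * h := by gcongr
  have hmiddle : ‖w (m * h) - w ((k + 1) * h)‖ ≤ ε * ((m - (k + 1)) * h) ^ γ := by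
    exact_mod_cast hgrid (k + 1) m hkm hm.le
  calc ‖w t - w s‖
      ≤ ‖w t - w (m * h)‖ + ‖w (m * h) - w ((k + 1) * h)‖
          + ‖w ((k + 1) * h) - w s‖ := by
        rw [add_assoc]
        exact (norm_sub_le_norm_sub_add_norm_sub _ _ _).trans
          (add_le_add_right (norm_sub_le_norm_sub_add_norm_sub _ _ _) _)
    _ ≤ ε * (t - s) ^ γ + ε * (t - s) ^ γ + ε * (t - s) ^ γ := by
        gcongr
        · exact (hcell m hm le_rfl hmt htm).trans (hpow_le _ (by linarith) (by linarith))
        · exact hmiddle.trans (hpow_le _ (by nlinarith) (by nlinarith))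
        · exact (hcell k hk hks hsk le_rfl).trans (hpow_le _ (by linarith) (by linarith))
    _ = 3 * ε * (t - s) ^ γ := by ring

end

/-- **A discrete Hölder bound on grid points lifts to the piecewise linear interpolation.**
Let `w : [0,T] → ℝ^d` be affine on each interval `[kT/n, (k+1)T/n]` and suppose
`|w(qT/n) - w(pT/n)| ≤ ε ((q-p)T/n)^γ` for all `0 ≤ p ≤ q ≤ n`. Then there is a constant
`C_γ`, depending only on `γ`, with `|w(t) - w(s)| ≤ C_γ ε (t-s)^γ` for all `0 ≤ s ≤ t ≤ T`. -/
theorem discrete_holder_lifts (γ : ℝ) (hγ0 : 0 < γ) (hγ1 : γ ≤ 1) :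
    ∃ C : ℝ, 0 < C ∧
      ∀ (d : ℕ) (T : ℝ), 0 < T →
      ∀ n : ℕ, 0 < n →
      ∀ w : ℝ → EuclideanSpace ℝ (Fin d),
        (∀ k : ℕ, k < n →
          ∀ t ∈ Icc ((k : ℝ) * T / n) (((k : ℝ) + 1) * T / n),
            w t = w ((k : ℝ) * T / n) +
              ((t - (k : ℝ) * T / n) / (T / n)) •
                (w (((k : ℝ) + 1) * T / n) - w ((k : ℝ) * T / n))) →
      ∀ ε : ℝ, 0 ≤ ε →
        (∀ p q : ℕ, p ≤ q → q ≤ n →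
          ‖w ((q : ℝ) * T / n) - w ((p : ℝ) * T / n)‖ ≤
            ε * (((q : ℝ) - (p : ℝ)) * T / n) ^ γ) →
      ∀ s t : ℝ, 0 ≤ s → s ≤ t → t ≤ T →
        ‖w t - w s‖ ≤ C * ε * (t - s) ^ γ := by
  refine ⟨3, three_pos, fun d T hT n hn w haff ε hε hgrid s t hs hst htT => ?_⟩
  simp only [mul_div_assoc] at haff hgrid
  have hTn : T = n * (T / n) := by field_simp
  exact norm_sub_le_three_mul_of_grid (div_pos hT (by exact_mod_cast hn)) hn hγ0.le hγ1 hε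
    haff hgrid hs hst (hTn ▸ htT)
end
end
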